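/- arXiv:1812.10591 — 8 statements merged into one kernel-verified Lean document; each statement's English description precedes it below -/
import Mathlib

section
/- Let x be a non-uniform lattice of either class and ν ∈ ℝ. Define σ̃_ν(z) := σ(z) + ½·τ_ν(z)·∇x_{ν+1}(z). Then there exist constants A, B, C, D, E ∈ ℂ such that for every z ∈ ℂ with ∇x_{ν+1}(z) ≠ 0 one has σ̃_ν(z) = A·x_ν(z)² + B·x_ν(z) + C and τ_ν(z) = D·x_ν(z) + E; that is, σ̃_ν and τ_ν are polynomials of degree at most two and at most one, respectively, in the variable x_ν(z). (Lemma 2.1) -/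
noncomputable section

open Finset

/-- `x` is a non-uniform lattice of one of the two classes (q-quadratic with
`q = e^w`, or quadratic), together with its associated functions `α = a` and
`γ = g`. -/
def IsNonUniformLattice (w : ℂ) (x : ℂ → ℂ) (a g : ℝ → ℂ) : Prop :=
  (Complex.exp w ≠ 1 ∧
    ∃ c1 c2 c3 : ℂ, c1 * c2 ≠ 0 ∧
      (∀ s : ℂ, x s = c1 * Complex.exp (s * w) + c2 * Complex.exp (-(s * w)) + c3) ∧
      (∀ μ : ℝ, a μ =
        (Complex.exp ((μ : ℂ) / 2 * w) + Complex.exp (-((μ : ℂ) / 2 * w))) / 2) ∧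
      (∀ μ : ℝ, g μ =
        (Complex.exp ((μ : ℂ) / 2 * w) - Complex.exp (-((μ : ℂ) / 2 * w))) /
          (Complex.exp ((1 : ℂ) / 2 * w) - Complex.exp (-((1 : ℂ) / 2 * w))))) ∨
  (∃ c1 c2 c3 : ℂ, c1 ≠ 0 ∧
    (∀ s : ℂ, x s = c1 * s ^ 2 + c2 * s + c3) ∧
    (∀ μ : ℝ, a μ = 1) ∧ (∀ μ : ℝ, g μ = (μ : ℂ)))

/-- `xl x ν s = x_ν(s) = x (s + ν/2)`. -/
def xl (x : ℂ → ℂ) (ν : ℝ) (s : ℂ) : ℂ := x (s + (ν : ℂ) / 2)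

/-- `σ(z) = σ̃(x z) - (1/2)·τ̃(x z)·∇x₁(z)`. -/
def sig (x : ℂ → ℂ) (st tt : Polynomial ℂ) (z : ℂ) : ℂ :=
  st.eval (x z) - (1 / 2) * tt.eval (x z) * (xl x 1 z - xl x 1 (z - 1))

/-- `κ_ν = α(ν-1)·τ̃' + (1/2)·γ(ν-1)·σ̃''`. -/
def kap (a g : ℝ → ℂ) (st tt : Polynomial ℂ) (ν : ℝ) : ℂ :=
  a (ν - 1) * tt.coeff 1 + (1 / 2) * g (ν - 1) * (2 * st.coeff 2)

/-- Backward difference quotient `∇_ν f (z) = ∇f(z)/∇x_ν(z)`. -/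
def nab (x : ℂ → ℂ) (ν : ℝ) (f : ℂ → ℂ) (z : ℂ) : ℂ :=
  (f z - f (z - 1)) / (xl x ν z - xl x ν (z - 1))

/-- Forward difference quotient `Δ_ν f (z) = Δf(z)/Δx_ν(z)`. -/
def del (x : ℂ → ℂ) (ν : ℝ) (f : ℂ → ℂ) (z : ℂ) : ℂ :=
  (f (z + 1) - f z) / (xl x ν (z + 1) - xl x ν z)

/-- Generalized power `[x_α(s) - x_α(z)]^{(m)} = ∏_{k=0}^{m-1} (x_α(s) - x_α(z-k))`. -/
def gp (x : ℂ → ℂ) (m : ℕ) (al : ℝ) (s z : ℂ) : ℂ :=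
  ∏ k ∈ Finset.range m, (xl x al s - xl x al (z - (k : ℂ)))

/-- The defining relation for the family `τ_ν = T ν`:
`τ_ν(z)·∇x_{ν+1}(z) = σ(z+ν) - σ(z) + τ(z+ν)·∇x₁(z+ν)`. -/
def TauFamily (x : ℂ → ℂ) (st tt : Polynomial ℂ) (T : ℝ → ℂ → ℂ) : Prop :=
  ∀ (ν : ℝ) (z : ℂ),
    T ν z * (xl x (ν + 1) z - xl x (ν + 1) (z - 1)) =
      sig x st tt (z + (ν : ℂ)) - sig x st tt z +
        tt.eval (x (z + (ν : ℂ))) * (xl x 1 (z + (ν : ℂ)) - xl x 1 (z + (ν : ℂ) - 1))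

/-!
Put `m = z + ν/2`, `h = ν/2` and `δ = ∇x₁`, so that `x_ν(z) = x(m)` and `∇x_{ν+1}(z) = δ(m)`,
while `x(z + ν), x(z)` and `∇x₁(z + ν), ∇x₁(z)` are the values of `x` and `δ` at `m ± h`.
On both lattice classes the shift by `±h` acts linearly on the pair `(x, δ)`:
`x(m ± h) = α x(m) + β ± γ δ(m)` and `δ(m ± h) = α' δ(m) ± (κ₁ x(m) + κ₀)`, and `δ(m)²` is a
quadratic polynomial in `x(m)`. Substituting, the terms of `τ_ν ∇x_{ν+1}` that are even in `δ(m)`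
cancel, leaving `δ(m)` times an affine function of `x(m)`; in `σ̃_ν` the odd terms cancel and
`δ(m)` survives only through `δ(m)²`.
-/

open Polynomial

theorem Polynomial.eval_eq_of_degree_le_two {R : Type*} [Semiring R] {p : R[X]}
    (hp : p.degree ≤ 2) (y : R) :
    p.eval y = p.coeff 2 * y ^ 2 + p.coeff 1 * y + p.coeff 0 := by
  conv_lhs => rw [eq_quadratic_of_degree_le_two hp]
  simp

theorem Polynomial.eval_eq_of_degree_le_one {R : Type*} [Semiring R] {p : R[X]}
    (hp : p.degree ≤ 1) (y : R) : p.eval y = p.coeff 1 * y + p.coeff 0 := by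
  conv_lhs => rw [eq_X_add_C_of_degree_le_one hp]
  simp

-- `∇x₁(m)` in the notation of the paper.
def centralDiff (x : ℂ → ℂ) (m : ℂ) : ℂ := x (m + 1 / 2) - x (m - 1 / 2)

structure LatticeShiftRelations (x : ℂ → ℂ) (h : ℂ) : Prop where
  shift : ∃ α β γ : ℂ, ∀ m,
    x (m + h) = α * x m + β + γ * centralDiff x m ∧
    x (m - h) = α * x m + β - γ * centralDiff x m
  centralDiff_shift : ∃ α κ₁ κ₀ : ℂ, ∀ m,
    centralDiff x (m + h) = α * centralDiff x m + (κ₁ * x m + κ₀) ∧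
    centralDiff x (m - h) = α * centralDiff x m - (κ₁ * x m + κ₀)
  centralDiff_sq : ∃ q₂ q₁ q₀ : ℂ, ∀ m, centralDiff x m ^ 2 = q₂ * x m ^ 2 + q₁ * x m + q₀

theorem latticeShiftRelations_quadratic (c₁ c₂ c₃ h : ℂ) :
    LatticeShiftRelations (fun s => c₁ * s ^ 2 + c₂ * s + c₃) h where
  shift := ⟨1, c₁ * h ^ 2, h, fun m => by constructor <;> simp only [centralDiff] <;> ring⟩
  centralDiff_shift :=
    ⟨1, 0, 2 * c₁ * h, fun m => by constructor <;> simp only [centralDiff] <;> ring⟩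
  centralDiff_sq := ⟨0, 4 * c₁, c₂ ^ 2 - 4 * c₁ * c₃, fun m => by simp only [centralDiff]; ring⟩

theorem latticeShiftRelations_of_exp {e : ℂ → ℂ} (he_add : ∀ a b, e (a + b) = e a * e b)
    (he_ne : ∀ a, e a ≠ 0) (he_one : e 1 ≠ 1) (c₁ c₂ c₃ h : ℂ) :
    LatticeShiftRelations (fun s => c₁ * e s + c₂ * (e s)⁻¹ + c₃) h := by
  have he_sub : ∀ a b, e (a - b) = e a * (e b)⁻¹ := fun a b => by
    rw [eq_mul_inv_iff_mul_eq₀ (he_ne b), ← he_add, sub_add_cancel]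
  have hp : e (1 / 2) ^ 2 - 1 ≠ 0 := by
    rw [sq, ← he_add, add_halves, sub_ne_zero]
    exact he_one
  have hP₀ := he_ne h
  have hp₀ := he_ne (1 / 2)
  set α := (e h + (e h)⁻¹) / 2
  set κ := (e (1 / 2) - (e (1 / 2))⁻¹) * (e h - (e h)⁻¹) / 2
  refine ⟨⟨α, c₃ - α * c₃, e (1 / 2) * (e h - (e h)⁻¹) / (2 * (e (1 / 2) ^ 2 - 1)), fun m => ?_⟩,
    ⟨α, κ, -κ * c₃, fun m => ?_⟩, ⟨(e (1 / 2) - (e (1 / 2))⁻¹) ^ 2,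
      -2 * c₃ * (e (1 / 2) - (e (1 / 2))⁻¹) ^ 2,
      (e (1 / 2) - (e (1 / 2))⁻¹) ^ 2 * (c₃ ^ 2 - 4 * c₁ * c₂), fun m => ?_⟩⟩
  all_goals have hu₀ := he_ne m
  all_goals simp only [centralDiff, he_add, he_sub, mul_inv, inv_inv, α, κ]
  · constructor <;> field_simp <;> ring
  · constructor <;> field_simp <;> ring
  · field_simp; ring

theorem IsNonUniformLattice.latticeShiftRelations {w : ℂ} {x : ℂ → ℂ} {a g : ℝ → ℂ}
    (hlat : IsNonUniformLattice w x a g) (h : ℂ) : LatticeShiftRelations x h := by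
  rcases hlat with ⟨hq, c₁, c₂, c₃, -, hx, -, -⟩ | ⟨c₁, c₂, c₃, -, hx, -, -⟩
  · have hx' : x = fun s => c₁ * Complex.exp (s * w) + c₂ * (Complex.exp (s * w))⁻¹ + c₃ :=
      funext fun s => by rw [hx, Complex.exp_neg]
    rw [hx']
    exact latticeShiftRelations_of_exp (fun a b => by rw [add_mul, Complex.exp_add])
      (fun _ => Complex.exp_ne_zero _) (by rwa [one_mul]) c₁ c₂ c₃ h
  · rw [funext hx]
    exact latticeShiftRelations_quadratic c₁ c₂ c₃ h

namespace LatticeShiftRelations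

variable {x : ℂ → ℂ} {h : ℂ} {s t : ℂ[X]}

theorem exists_eq_affine_mul_centralDiff (H : LatticeShiftRelations x h) (hs : s.degree ≤ 2)
    (ht : t.degree ≤ 1) :
    ∃ D E : ℂ, ∀ m,
      s.eval (x (m + h)) - s.eval (x (m - h)) +
          (t.eval (x (m + h)) * centralDiff x (m + h) +
            t.eval (x (m - h)) * centralDiff x (m - h)) / 2 =
        (D * x m + E) * centralDiff x m := by
  obtain ⟨α, β, γ, hx⟩ := H.shift
  obtain ⟨α', κ₁, κ₀, hδ⟩ := H.centralDiff_shift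
  refine ⟨4 * γ * s.coeff 2 * α + α' * t.coeff 1 * α + γ * t.coeff 1 * κ₁,
    2 * γ * s.coeff 1 + 4 * γ * s.coeff 2 * β + α' * t.coeff 0 + α' * t.coeff 1 * β
      + γ * t.coeff 1 * κ₀, fun m => ?_⟩
  rw [eval_eq_of_degree_le_two hs, eval_eq_of_degree_le_two hs, eval_eq_of_degree_le_one ht,
    eval_eq_of_degree_le_one ht, (hx m).1, (hx m).2, (hδ m).1, (hδ m).2]
  ring

theorem exists_eq_quadratic (H : LatticeShiftRelations x h) (hs : s.degree ≤ 2)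
    (ht : t.degree ≤ 1) :
    ∃ A B C : ℂ, ∀ m,
      (s.eval (x (m + h)) + s.eval (x (m - h))) / 2 +
          (t.eval (x (m + h)) * centralDiff x (m + h) -
            t.eval (x (m - h)) * centralDiff x (m - h)) / 4 =
        A * x m ^ 2 + B * x m + C := by
  obtain ⟨α, β, γ, hx⟩ := H.shift
  obtain ⟨α', κ₁, κ₀, hδ⟩ := H.centralDiff_shift
  obtain ⟨q₂, q₁, q₀, hsq⟩ := H.centralDiff_sq
  set K := s.coeff 2 * γ ^ 2 + t.coeff 1 * γ * α' / 2
  refine ⟨s.coeff 2 * α ^ 2 + t.coeff 1 * α * κ₁ / 2 + K * q₂,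
    s.coeff 1 * α + 2 * s.coeff 2 * α * β + (t.coeff 0 * κ₁ + t.coeff 1 * (α * κ₀ + β * κ₁)) / 2
      + K * q₁,
    s.coeff 0 + s.coeff 1 * β + s.coeff 2 * β ^ 2 + (t.coeff 0 + t.coeff 1 * β) * κ₀ / 2 + K * q₀,
    fun m => ?_⟩
  rw [eval_eq_of_degree_le_two hs, eval_eq_of_degree_le_two hs, eval_eq_of_degree_le_one ht,
    eval_eq_of_degree_le_one ht, (hx m).1, (hx m).2, (hδ m).1, (hδ m).2]
  linear_combination K * hsq m

end LatticeShiftRelations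

theorem xl_sub_xl_sub_one_add_one (x : ℂ → ℂ) (ν : ℝ) (z : ℂ) :
    xl x (ν + 1) z - xl x (ν + 1) (z - 1) = centralDiff x (z + ν / 2) := by
  simp only [xl, centralDiff]
  push_cast
  ring_nf

theorem tauFamily_rhs_eq (x : ℂ → ℂ) (st tt : ℂ[X]) (ν : ℝ) (z : ℂ) :
    sig x st tt (z + ν) - sig x st tt z +
        tt.eval (x (z + ν)) * (xl x 1 (z + ν) - xl x 1 (z + ν - 1)) =
      st.eval (x (z + ν / 2 + ν / 2)) - st.eval (x (z + ν / 2 - ν / 2)) +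
        (tt.eval (x (z + ν / 2 + ν / 2)) * centralDiff x (z + ν / 2 + ν / 2) +
          tt.eval (x (z + ν / 2 - ν / 2)) * centralDiff x (z + ν / 2 - ν / 2)) / 2 := by
  simp only [sig, xl, centralDiff]
  push_cast
  ring_nf

theorem sig_add_half_tauFamily_rhs_eq (x : ℂ → ℂ) (st tt : ℂ[X]) (ν : ℝ) (z : ℂ) :
    sig x st tt z + 1 / 2 * (sig x st tt (z + ν) - sig x st tt z +
        tt.eval (x (z + ν)) * (xl x 1 (z + ν) - xl x 1 (z + ν - 1))) =
      (st.eval (x (z + ν / 2 + ν / 2)) + st.eval (x (z + ν / 2 - ν / 2))) / 2 +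
        (tt.eval (x (z + ν / 2 + ν / 2)) * centralDiff x (z + ν / 2 + ν / 2) -
          tt.eval (x (z + ν / 2 - ν / 2)) * centralDiff x (z + ν / 2 - ν / 2)) / 4 := by
  simp only [sig, xl, centralDiff]
  push_cast
  ring_nf

/-- Lemma 2.1: `σ̃_ν` and `τ_ν` are polynomials of degree at most two and one,
respectively, in the variable `x_ν(z)`. -/
theorem lemma2_1
    (w : ℂ) (x : ℂ → ℂ) (a g : ℝ → ℂ)
    (hlat : IsNonUniformLattice w x a g)
    (st tt : Polynomial ℂ) (hst : st.degree ≤ 2) (htt : tt.degree ≤ 1)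
    (T : ℝ → ℂ → ℂ) (hT : TauFamily x st tt T) (ν : ℝ) :
    ∃ A B C D E : ℂ, ∀ z : ℂ,
      xl x (ν + 1) z - xl x (ν + 1) (z - 1) ≠ 0 →
      (sig x st tt z + (1 / 2) * T ν z * (xl x (ν + 1) z - xl x (ν + 1) (z - 1)) =
          A * xl x ν z ^ 2 + B * xl x ν z + C) ∧
        T ν z = D * xl x ν z + E := by
  have H := hlat.latticeShiftRelations (ν / 2)
  obtain ⟨D, E, hτ⟩ := H.exists_eq_affine_mul_centralDiff hst htt
  obtain ⟨A, B, C, hσ⟩ := H.exists_eq_quadratic hst htt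
  refine ⟨A, B, C, D, E, fun z hz => ⟨?_, ?_⟩⟩
  · rw [mul_assoc, hT ν z, sig_add_half_tauFamily_rhs_eq, hσ]
    rfl
  · rw [xl_sub_xl_sub_one_add_one] at hz
    have hTz := hT ν z
    rw [xl_sub_xl_sub_one_add_one, tauFamily_rhs_eq, hτ] at hTz
    exact mul_right_cancel₀ hz hTz
end
end

section
/- Let x be a non-uniform lattice of either class and ν ∈ ℝ. Then there exists a constant c(ν) ∈ ℂ such that τ_ν(z) = κ_{2ν+1}·x_ν(z) + c(ν) for every z ∈ ℂ with ∇x_{ν+1}(z) ≠ 0; i.e. τ_ν is a polynomial of degree at most one in x_ν(z) with leading coefficient κ_{2ν+1}. (Proposition 2.2) -/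
noncomputable section

open Finset

/-!
Both classes of lattices satisfy `x(s+μ) - x(s) = γ(μ)·∇x_{μ+1}(s)` and
`x(s+μ) + x(s) = 2α(μ)·x_μ(s) + β(μ)`, and `α`, `γ` obey the `cosh`/`sinh` addition formulas
`γ(μ+1) - γ(μ-1) = 2α(μ)`, `2α(μ)γ(μ) = γ(2μ)` and `2α(μ)² + (α(2) - 1)γ(μ)² = 2α(2μ)`.
The right-hand side of the relation defining `τ_ν` involves `x` and `∇x₁` at `z + ν` and `z` only
through `x(z+ν) ± x(z)` and `∇x₁(z+ν) ± ∇x₁(z)`. By the lattice relations these are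
`γ(ν)·∇x_{ν+1}(z)`, an affine function of `x_ν(z)`, `2α(ν)·∇x_{ν+1}(z)`, and `γ(ν)` times an
affine function of `x_ν(z)` (the sum relation at `μ = 2`). Collecting the coefficient of
`x_ν(z)·∇x_{ν+1}(z)` with the addition formulas gives `κ_{2ν+1}`; it remains to cancel
`∇x_{ν+1}(z) ≠ 0`.
-/

/-- The relations of the header, those for `x` written at the midpoint `c = s + μ/2`. -/
structure LatticeRelations (x : ℂ → ℂ) (a g b : ℝ → ℂ) : Prop where
  add_eq : ∀ (μ : ℝ) (c : ℂ), x (c + μ / 2) + x (c - μ / 2) = 2 * a μ * x c + b μ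
  sub_eq : ∀ (μ : ℝ) (c : ℂ),
    x (c + μ / 2) - x (c - μ / 2) = g μ * (x (c + 1 / 2) - x (c - 1 / 2))
  g_add_one_sub_g_sub_one : ∀ μ : ℝ, g (μ + 1) - g (μ - 1) = 2 * a μ
  two_mul_a_mul_g : ∀ μ : ℝ, 2 * a μ * g μ = g (2 * μ)
  a_two_mul : ∀ μ : ℝ, 2 * a μ ^ 2 + (a 2 - 1) * g μ ^ 2 = 2 * a (2 * μ)

section QQuadratic

open Complex

variable {w c1 c2 c3 : ℂ} {x : ℂ → ℂ} {a g : ℝ → ℂ}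

theorem exp_half_sub_inv_ne_zero (hw : exp w ≠ 1) :
    exp ((1 : ℂ) / 2 * w) - (exp ((1 : ℂ) / 2 * w))⁻¹ ≠ 0 := by
  rw [sub_ne_zero]
  intro h
  apply hw
  rw [show w = 1 / 2 * w + 1 / 2 * w by ring, exp_add]
  nth_rw 2 [h]
  exact mul_inv_cancel₀ (exp_ne_zero _)

theorem latticeRelations_of_qQuadratic (hw : exp w ≠ 1)
    (hx : ∀ s : ℂ, x s = c1 * exp (s * w) + c2 * exp (-(s * w)) + c3)
    (ha : ∀ μ : ℝ, a μ = (exp ((μ : ℂ) / 2 * w) + exp (-((μ : ℂ) / 2 * w))) / 2)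
    (hg : ∀ μ : ℝ, g μ = (exp ((μ : ℂ) / 2 * w) - exp (-((μ : ℂ) / 2 * w))) /
      (exp ((1 : ℂ) / 2 * w) - exp (-((1 : ℂ) / 2 * w)))) :
    LatticeRelations x a g (fun μ => 2 * c3 * (1 - a μ)) := by
  have hdouble (t : ℂ) : exp (2 * t / 2 * w) = exp (t / 2 * w) * exp (t / 2 * w) := by
    rw [← exp_add]
    ring_nf
  have h2 : exp (2 / 2 * w) = exp (1 / 2 * w) * exp (1 / 2 * w) := by
    simpa using hdouble 1
  have hρ := exp_half_sub_inv_ne_zero hw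
  simp only [exp_neg] at hx ha hg
  obtain ⟨r, hr⟩ : ∃ r, exp ((1 : ℂ) / 2 * w) = r := ⟨_, rfl⟩
  have hr0 : r ≠ 0 := hr ▸ exp_ne_zero _
  -- `field_simp` does not clear the denominator `r - r⁻¹` directly, so it is kept as an atom `ρ`
  -- and unfolded once it has been cleared.
  obtain ⟨ρ, hρ_def⟩ : ∃ ρ, r - r⁻¹ = ρ := ⟨_, rfl⟩
  rw [hr, hρ_def] at hg
  rw [hr, hρ_def] at hρ
  constructor
  · intro μ c
    simp only [hx, ha, add_mul, sub_mul, exp_add, exp_sub]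
    field_simp
    ring
  · intro μ c
    simp only [hx, hg, add_mul, sub_mul, exp_add, exp_sub, hr]
    field_simp
    rw [← hρ_def]
    field_simp
    ring
  · intro μ
    simp only [hg, ha]
    push_cast
    simp only [add_div, sub_div, add_mul, sub_mul, exp_add, exp_sub, hr]
    field_simp
    rw [← hρ_def]
    field_simp
    ring
  · intro μ
    simp only [hg, ha]
    push_cast
    simp only [hdouble]
    field_simp
    ring
  · intro μ
    simp only [hg, ha]
    push_cast
    rw [hdouble, h2, hr]
    field_simp
    rw [← hρ_def]
    field_simp
    ring

end QQuadratic

theorem latticeRelations_of_quadratic {c1 c2 c3 : ℂ} {x : ℂ → ℂ} {a g : ℝ → ℂ}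
    (hx : ∀ s : ℂ, x s = c1 * s ^ 2 + c2 * s + c3)
    (ha : ∀ μ : ℝ, a μ = 1) (hg : ∀ μ : ℝ, g μ = μ) :
    LatticeRelations x a g (fun μ => c1 * μ ^ 2 / 2) where
  add_eq μ c := by simp only [hx, ha]; ring
  sub_eq μ c := by simp only [hx, hg]; ring
  g_add_one_sub_g_sub_one μ := by simp only [hg, ha]; push_cast; ring
  two_mul_a_mul_g μ := by simp only [hg, ha]; push_cast; ring
  a_two_mul μ := by simp only [hg, ha]; ring

namespace LatticeRelations

variable {x : ℂ → ℂ} {a g b : ℝ → ℂ}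

theorem sub_shift (hx : LatticeRelations x a g b) (μ : ℝ) (z : ℂ) :
    x (z + μ) - x z = g μ * (xl x (μ + 1) z - xl x (μ + 1) (z - 1)) := by
  have h := hx.sub_eq μ (z + μ / 2)
  simp only [xl]
  push_cast
  ring_nf at h ⊢
  exact h

theorem add_shift (hx : LatticeRelations x a g b) (μ : ℝ) (z : ℂ) :
    x (z + μ) + x z = 2 * a μ * xl x μ z + b μ := by
  have h := hx.add_eq μ (z + μ / 2)
  simp only [xl]
  ring_nf at h ⊢
  exact h

theorem nabla_add_nabla (hx : LatticeRelations x a g b) (μ : ℝ) (z : ℂ) :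
    (xl x 1 (z + μ) - xl x 1 (z + μ - 1)) + (xl x 1 z - xl x 1 (z - 1)) =
      2 * a μ * (xl x (μ + 1) z - xl x (μ + 1) (z - 1)) := by
  have hplus := hx.sub_eq (μ + 1) (z + μ / 2)
  have hminus := hx.sub_eq (μ - 1) (z + μ / 2)
  rw [← hx.g_add_one_sub_g_sub_one]
  simp only [xl]
  push_cast at hplus hminus ⊢
  linear_combination (norm := ring_nf) hplus - hminus

theorem nabla_sub_nabla (hx : LatticeRelations x a g b) (μ : ℝ) (z : ℂ) :
    (xl x 1 (z + μ) - xl x 1 (z + μ - 1)) - (xl x 1 z - xl x 1 (z - 1)) =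
      g μ * ((2 * a 2 - 2) * xl x μ z + b 2) := by
  have hplus := hx.sub_eq μ (z + μ / 2 + 1 / 2)
  have hminus := hx.sub_eq μ (z + μ / 2 - 1 / 2)
  have htwo := hx.add_eq 2 (z + μ / 2)
  simp only [xl]
  push_cast at hplus hminus htwo ⊢
  linear_combination (norm := ring_nf) hplus - hminus + g μ * htwo

end LatticeRelations

theorem IsNonUniformLattice.exists_latticeRelations {w : ℂ} {x : ℂ → ℂ} {a g : ℝ → ℂ}
    (hlat : IsNonUniformLattice w x a g) : ∃ b, LatticeRelations x a g b := by
  rcases hlat with ⟨hw, c1, c2, c3, -, hx, ha, hg⟩ | ⟨c1, c2, c3, -, hx, ha, hg⟩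
  · exact ⟨_, latticeRelations_of_qQuadratic hw hx ha hg⟩
  · exact ⟨_, latticeRelations_of_quadratic hx ha hg⟩

theorem sig_add_sub_sig_add_eval_mul (x : ℂ → ℂ) {st tt : Polynomial ℂ} (hst : st.degree ≤ 2)
    (htt : tt.degree ≤ 1) (z h : ℂ) :
    sig x st tt (z + h) - sig x st tt z +
        tt.eval (x (z + h)) * (xl x 1 (z + h) - xl x 1 (z + h - 1)) =
      (x (z + h) - x z) * (st.coeff 1 + st.coeff 2 * (x (z + h) + x z)) +
      (tt.coeff 0 / 2 + tt.coeff 1 / 4 * (x (z + h) + x z)) *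
        ((xl x 1 (z + h) - xl x 1 (z + h - 1)) + (xl x 1 z - xl x 1 (z - 1))) +
      tt.coeff 1 / 4 * (x (z + h) - x z) *
        ((xl x 1 (z + h) - xl x 1 (z + h - 1)) - (xl x 1 z - xl x 1 (z - 1))) := by
  have hst_eval (y : ℂ) : st.eval y = st.coeff 2 * y ^ 2 + st.coeff 1 * y + st.coeff 0 := by
    conv_lhs => rw [Polynomial.eq_quadratic_of_degree_le_two hst]
    simp
  have htt_eval (y : ℂ) : tt.eval y = tt.coeff 1 * y + tt.coeff 0 := by
    conv_lhs => rw [Polynomial.eq_X_add_C_of_degree_le_one htt]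
    simp
  simp only [sig, hst_eval, htt_eval]
  ring

theorem LatticeRelations.exists_sig_add_sub_sig_add_eval_mul_eq {x : ℂ → ℂ} {a g b : ℝ → ℂ}
    (hx : LatticeRelations x a g b) {st tt : Polynomial ℂ} (hst : st.degree ≤ 2)
    (htt : tt.degree ≤ 1) (ν : ℝ) :
    ∃ c : ℂ, ∀ z : ℂ,
      sig x st tt (z + ν) - sig x st tt z +
          tt.eval (x (z + ν)) * (xl x 1 (z + ν) - xl x 1 (z + ν - 1)) =
        (kap a g st tt (2 * ν + 1) * xl x ν z + c) * (xl x (ν + 1) z - xl x (ν + 1) (z - 1)) := by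
  refine ⟨g ν * (st.coeff 1 + st.coeff 2 * b ν) + a ν * (tt.coeff 0 + tt.coeff 1 * b ν / 2) +
    tt.coeff 1 / 4 * g ν ^ 2 * b 2, fun z => ?_⟩
  have hkap : kap a g st tt (2 * ν + 1) = a (2 * ν) * tt.coeff 1 + g (2 * ν) * st.coeff 2 := by
    rw [kap, add_sub_cancel_right]
    ring
  rw [sig_add_sub_sig_add_eval_mul x hst htt, hx.sub_shift, hx.add_shift, hx.nabla_add_nabla,
    hx.nabla_sub_nabla, hkap]
  linear_combination (xl x ν z * (xl x (ν + 1) z - xl x (ν + 1) (z - 1))) *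
    (st.coeff 2 * hx.two_mul_a_mul_g ν + tt.coeff 1 / 2 * hx.a_two_mul ν)

/-- Proposition 2.2: `τ_ν(z) = κ_{2ν+1}·x_ν(z) + c(ν)`. -/
theorem prop2_2
    (w : ℂ) (x : ℂ → ℂ) (a g : ℝ → ℂ)
    (hlat : IsNonUniformLattice w x a g)
    (st tt : Polynomial ℂ) (hst : st.degree ≤ 2) (htt : tt.degree ≤ 1)
    (T : ℝ → ℂ → ℂ) (hT : TauFamily x st tt T) (ν : ℝ) :
    ∃ c : ℂ, ∀ z : ℂ,
      xl x (ν + 1) z - xl x (ν + 1) (z - 1) ≠ 0 →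
      T ν z = kap a g st tt (2 * ν + 1) * xl x ν z + c := by
  obtain ⟨b, hx⟩ := hlat.exists_latticeRelations
  obtain ⟨c, hc⟩ := hx.exists_sig_add_sub_sig_add_eval_mul_eq hst htt ν
  exact ⟨c, fun z hz => mul_right_cancel₀ hz ((hT ν z).trans (hc z))⟩
end
end

section
/- Let x be a non-uniform lattice of either class, δ ∈ ℝ and λ ∈ ℂ. Then: (i) τ*_δ(z) = −τ_{δ−2}(z+1) for every z ∈ ℂ at which Δx_{δ−1}(z) ≠ 0 and ∇x_{δ−1}(z+1) ≠ 0; and (ii) the function z ↦ λ − Δ_{δ−1}[(τ_δ(z−1)·∇x_{δ−1}(z) − ∇σ(z))/∇x_δ(z)] is constant where defined, equal to λ − κ_{2δ−1}. (Corollary 3.1, with δ = ν−μ) -/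
noncomputable section

open Finset

/-- Adjoint data: `σ*(z) = σ(z-1) + τ_δ(z-1)·∇x_{δ-1}(z)`. -/
def sigStar (x : ℂ → ℂ) (st tt : Polynomial ℂ) (T : ℝ → ℂ → ℂ) (δ : ℝ) (z : ℂ) : ℂ :=
  sig x st tt (z - 1) + T δ (z - 1) * (xl x (δ - 1) z - xl x (δ - 1) (z - 1))

/-- Adjoint data: `τ*_δ(z) = (σ(z+1) - σ(z-1) - τ_δ(z-1)·∇x_{δ-1}(z)) / Δx_{δ-1}(z)`. -/
def tauStar (x : ℂ → ℂ) (st tt : Polynomial ℂ) (T : ℝ → ℂ → ℂ) (δ : ℝ) (z : ℂ) : ℂ :=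
  (sig x st tt (z + 1) - sig x st tt (z - 1) -
      T δ (z - 1) * (xl x (δ - 1) z - xl x (δ - 1) (z - 1))) /
    (xl x (δ - 1) (z + 1) - xl x (δ - 1) z)

set_option maxHeartbeats 4000000

/-- Corollary 3.1 (with `δ = ν - μ`). -/
theorem cor3_1
    (w : ℂ) (x : ℂ → ℂ) (a g : ℝ → ℂ)
    (hlat : IsNonUniformLattice w x a g)
    (st tt : Polynomial ℂ) (hst : st.degree ≤ 2) (htt : tt.degree ≤ 1)
    (T : ℝ → ℂ → ℂ) (hT : TauFamily x st tt T) (δ : ℝ) (lam : ℂ) :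
    (∀ z : ℂ,
        xl x (δ - 1) (z + 1) - xl x (δ - 1) z ≠ 0 →
        xl x (δ - 1) (z + 1) - xl x (δ - 1) (z + 1 - 1) ≠ 0 →
        tauStar x st tt T δ z = -T (δ - 2) (z + 1)) ∧
      (∀ z : ℂ,
        xl x δ z - xl x δ (z - 1) ≠ 0 →
        xl x δ (z + 1) - xl x δ z ≠ 0 →
        xl x (δ - 1) (z + 1) - xl x (δ - 1) z ≠ 0 →
        lam - del x (δ - 1)
            (fun u => (T δ (u - 1) * (xl x (δ - 1) u - xl x (δ - 1) (u - 1)) -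
                (sig x st tt u - sig x st tt (u - 1))) /
              (xl x δ u - xl x δ (u - 1))) z =
          lam - kap a g st tt (2 * δ - 1)) := by
  constructor
  ·
    intro z hd _
    rw [tauStar, div_eq_iff hd]
    have h1 := hT (δ - 2) (z + 1)
    have h2 := hT δ (z - 1)
    simp only [sig, xl] at h1 h2 ⊢
    push_cast at h1 h2 ⊢
    ring_nf at h1 h2 ⊢
    linear_combination h1 - h2
  ·
    intro z hD0 hD1 hdel
    have xlcongr : ∀ (ν ν' : ℝ) (s s' : ℂ), s + (ν:ℂ)/2 = s' + (ν':ℂ)/2 → xl x ν s = xl x ν' s' := by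
      intro ν ν' s s' h; simp only [xl, h]
    congr 1
    rw [del]
    simp only [add_sub_cancel_right]
    -- rewrite the two T-products using hT
    have h1 := hT δ z
    rw [xlcongr (δ+1) (δ-1) z (z+1) (by push_cast; ring),
        xlcongr (δ+1) (δ-1) (z-1) z (by push_cast; ring)] at h1
    have h0 := hT δ (z-1)
    rw [xlcongr (δ+1) (δ-1) (z-1) z (by push_cast; ring),
        xlcongr (δ+1) (δ-1) (z-1-1) (z-1) (by push_cast; ring)] at h0
    rw [h1, h0]
    rw [div_sub_div _ _ hD1 hD0, div_div, div_eq_iff (by exact mul_ne_zero (mul_ne_zero hD1 hD0) hdel)]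
    have hstn : st.natDegree ≤ 2 := Polynomial.natDegree_le_iff_degree_le.mpr hst
    have httn : tt.natDegree ≤ 1 := Polynomial.natDegree_le_iff_degree_le.mpr htt
    have hstev : ∀ y : ℂ, st.eval y = st.coeff 0 + st.coeff 1 * y + st.coeff 2 * y^2 := by
      intro y
      rw [Polynomial.eval_eq_sum_range' (Nat.lt_succ_of_le hstn)]
      simp [Finset.sum_range_succ]; try ring
    have httev : ∀ y : ℂ, tt.eval y = tt.coeff 0 + tt.coeff 1 * y := by
      intro y
      rw [Polynomial.eval_eq_sum_range' (Nat.lt_succ_of_le httn)]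
      simp [Finset.sum_range_succ]
    obtain ⟨hq, c1, c2, c3, hc, hx, ha, hg⟩ | ⟨c1, c2, c3, hc, hx, ha, hg⟩ := hlat
    · simp only [sig, xl, kap, hstev, httev, hx, ha]
      push_cast
      have keyP : ∀ (i j : ℕ) (c : ℂ), c = z + (i : ℂ)/2 + (j : ℂ)*((δ:ℂ)/2) →
          Complex.exp (c * w) = Complex.exp (z*w) * Complex.exp (1/2*w) ^ i *
            Complex.exp ((δ:ℂ)/2*w) ^ j := by
        intro i j c hc
        rw [hc, show (z + (i : ℂ)/2 + (j : ℂ)*((δ:ℂ)/2)) * w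
              = z*w + (i:ℂ)*(1/2*w) + (j:ℂ)*((δ:ℂ)/2*w) by ring,
            Complex.exp_add, Complex.exp_add, Complex.exp_nat_mul, Complex.exp_nat_mul]
      have keyM : ∀ (i j : ℕ) (c : ℂ), c = z - (i : ℂ)/2 + (j : ℂ)*((δ:ℂ)/2) →
          Complex.exp (c * w) = Complex.exp (z*w) * Complex.exp (-(1/2*w)) ^ i *
            Complex.exp ((δ:ℂ)/2*w) ^ j := by
        intro i j c hc
        rw [hc, show (z - (i : ℂ)/2 + (j : ℂ)*((δ:ℂ)/2)) * w
              = z*w + (i:ℂ)*(-(1/2*w)) + (j:ℂ)*((δ:ℂ)/2*w) by ring,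
            Complex.exp_add, Complex.exp_add, Complex.exp_nat_mul, Complex.exp_nat_mul]
      have keyNP : ∀ (i j : ℕ) (c : ℂ), c = z + (i : ℂ)/2 + (j : ℂ)*((δ:ℂ)/2) →
          Complex.exp (-(c * w)) = Complex.exp (-(z*w)) * Complex.exp (-(1/2*w)) ^ i *
            Complex.exp (-((δ:ℂ)/2*w)) ^ j := by
        intro i j c hc
        rw [hc, show -((z + (i : ℂ)/2 + (j : ℂ)*((δ:ℂ)/2)) * w)
              = -(z*w) + (i:ℂ)*(-(1/2*w)) + (j:ℂ)*(-((δ:ℂ)/2*w)) by ring,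
            Complex.exp_add, Complex.exp_add, Complex.exp_nat_mul, Complex.exp_nat_mul]
      have keyNM : ∀ (i j : ℕ) (c : ℂ), c = z - (i : ℂ)/2 + (j : ℂ)*((δ:ℂ)/2) →
          Complex.exp (-(c * w)) = Complex.exp (-(z*w)) * Complex.exp (1/2*w) ^ i *
            Complex.exp (-((δ:ℂ)/2*w)) ^ j := by
        intro i j c hc
        rw [hc, show -((z - (i : ℂ)/2 + (j : ℂ)*((δ:ℂ)/2)) * w)
              = -(z*w) + (i:ℂ)*(1/2*w) + (j:ℂ)*(-((δ:ℂ)/2*w)) by ring,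
            Complex.exp_add, Complex.exp_add, Complex.exp_nat_mul, Complex.exp_nat_mul]
      have e1 : Complex.exp ((2*(δ:ℂ)-1-1)/2*w)
          = Complex.exp (-(1/2*w)) ^ 2 * Complex.exp ((δ:ℂ)/2*w) ^ 2 := by
        rw [show (2*(δ:ℂ)-1-1)/2*w = ((2:ℕ):ℂ)*(-(1/2*w)) + ((2:ℕ):ℂ)*((δ:ℂ)/2*w) by push_cast; ring,
            Complex.exp_add, Complex.exp_nat_mul, Complex.exp_nat_mul]
      have e2 : Complex.exp (-((2*(δ:ℂ)-1-1)/2*w))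
          = Complex.exp (1/2*w) ^ 2 * Complex.exp (-((δ:ℂ)/2*w)) ^ 2 := by
        rw [show -((2*(δ:ℂ)-1-1)/2*w) = ((2:ℕ):ℂ)*(1/2*w) + ((2:ℕ):ℂ)*(-((δ:ℂ)/2*w)) by push_cast; ring,
            Complex.exp_add, Complex.exp_nat_mul, Complex.exp_nat_mul]
      have hUr : Complex.exp (1/2*w) * Complex.exp (-(1/2*w)) = 1 := by
        rw [← Complex.exp_add]; simp
      have hZr : Complex.exp (z*w) * Complex.exp (-(z*w)) = 1 := by
        rw [← Complex.exp_add]; simp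
      have hDr : Complex.exp ((δ:ℂ)/2*w) * Complex.exp (-((δ:ℂ)/2*w)) = 1 := by
        rw [← Complex.exp_add]; simp
      have hw2 : Complex.exp (1/2*w) * Complex.exp (1/2*w) = Complex.exp w := by
        rw [← Complex.exp_add]; congr 1; ring
      have hUne : Complex.exp (1/2*w) - Complex.exp (-(1/2*w)) ≠ 0 := by
        rw [sub_ne_zero]
        intro h
        apply hq
        rw [← hw2]
        nth_rewrite 2 [h]
        exact hUr
      have hAr : g (2*δ - 1 - 1) * (Complex.exp (1/2*w) - Complex.exp (-(1/2*w)))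
          = Complex.exp (-(1/2*w)) ^ 2 * Complex.exp ((δ:ℂ)/2*w) ^ 2
            - Complex.exp (1/2*w) ^ 2 * Complex.exp (-((δ:ℂ)/2*w)) ^ 2 := by
        rw [hg]
        push_cast
        rw [e1, e2, div_mul_cancel₀ _ hUne]
      rw [e1, e2,
          keyM 1 1 (z + (↑δ - 1) / 2) (by push_cast; ring),
          keyNM 1 1 (z + (↑δ - 1) / 2) (by push_cast; ring),
          keyP 1 1 (z + 1 + (↑δ - 1) / 2) (by push_cast; ring),
          keyNP 1 1 (z + 1 + (↑δ - 1) / 2) (by push_cast; ring),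
          keyP 3 0 (z + 1 + 1 / 2) (by push_cast; ring),
          keyNP 3 0 (z + 1 + 1 / 2) (by push_cast; ring),
          keyP 2 1 (z + 1 + ↑δ / 2) (by push_cast; ring),
          keyNP 2 1 (z + 1 + ↑δ / 2) (by push_cast; ring),
          keyP 1 0 (z + 1 - 1 + 1 / 2) (by push_cast; ring),
          keyNP 1 0 (z + 1 - 1 + 1 / 2) (by push_cast; ring),
          keyP 1 0 (z + 1 / 2) (by push_cast; ring),
          keyNP 1 0 (z + 1 / 2) (by push_cast; ring),
          keyP 2 0 (z + 1) (by push_cast; ring),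
          keyNP 2 0 (z + 1) (by push_cast; ring),
          keyP 1 2 (z + ↑δ + 1 / 2) (by push_cast; ring),
          keyNP 1 2 (z + ↑δ + 1 / 2) (by push_cast; ring),
          keyM 1 2 (z + ↑δ - 1 + 1 / 2) (by push_cast; ring),
          keyNM 1 2 (z + ↑δ - 1 + 1 / 2) (by push_cast; ring),
          keyP 0 1 (z + ↑δ / 2) (by push_cast; ring),
          keyNP 0 1 (z + ↑δ / 2) (by push_cast; ring),
          keyP 0 2 (z + ↑δ) (by push_cast; ring),
          keyNP 0 2 (z + ↑δ) (by push_cast; ring),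
          keyM 1 0 (z - 1 + 1 / 2) (by push_cast; ring),
          keyNM 1 0 (z - 1 + 1 / 2) (by push_cast; ring),
          keyM 1 2 (z - 1 + ↑δ + 1 / 2) (by push_cast; ring),
          keyNM 1 2 (z - 1 + ↑δ + 1 / 2) (by push_cast; ring),
          keyM 3 2 (z - 1 + ↑δ - 1 + 1 / 2) (by push_cast; ring),
          keyNM 3 2 (z - 1 + ↑δ - 1 + 1 / 2) (by push_cast; ring),
          keyM 2 1 (z - 1 + ↑δ / 2) (by push_cast; ring),
          keyNM 2 1 (z - 1 + ↑δ / 2) (by push_cast; ring),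
          keyM 2 2 (z - 1 + ↑δ) (by push_cast; ring),
          keyNM 2 2 (z - 1 + ↑δ) (by push_cast; ring),
          keyM 3 0 (z - 1 - 1 + 1 / 2) (by push_cast; ring),
          keyNM 3 0 (z - 1 - 1 + 1 / 2) (by push_cast; ring),
          keyM 2 0 (z - 1) (by push_cast; ring),
          keyNM 2 0 (z - 1) (by push_cast; ring),
          keyP 0 0 (z) (by push_cast; ring),
          keyNP 0 0 (z) (by push_cast; ring)]
      set Z := Complex.exp (z*w) with hZdef
      set Zi := Complex.exp (-(z*w)) with hZidef
      set U := Complex.exp (1/2*w) with hUdef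
      set Ui := Complex.exp (-(1/2*w)) with hUidef
      set D := Complex.exp ((δ:ℂ)/2*w) with hDdef
      set Di := Complex.exp (-((δ:ℂ)/2*w)) with hDidef
      set s0 := st.coeff 0 with hs0
      set s1 := st.coeff 1 with hs1
      set s2 := st.coeff 2 with hs2
      set t0 := tt.coeff 0 with ht0
      set t1 := tt.coeff 1 with ht1
      apply mul_right_cancel₀ hUne
      linear_combination (norm := ring1)
        ((1*Ui*Di*c1*c2*s1 + 2*Ui*Di*c1*c2*c3*s2 + 1*Ui*D*c1*c2*s1 + 2*Ui*D*c1*c2*c3*s2 + -1*Ui*D*Di^2*c1*c2*s1 + -2*Ui*D*Di^2*c1*c2*c3*s2 + -1*Ui*D^2*Di*c1*c2*s1 + -2*Ui*D^2*Di*c1*c2*c3*s2 + (1/2)*Ui^2*Di*c1*c2*t0 + (1/2)*Ui^2*Di*c1*c2*c3*t1 + (-1/2)*Ui^2*D*Di^2*c1*c2*t0 + (-1/2)*Ui^2*D*Di^2*c1*c2*c3*t1 + -1*Ui^3*Di*c1*c2*s1 + -2*Ui^3*Di*c1*c2*c3*s2 + 1*Ui^3*D*c1*c2*s1 + 2*Ui^3*D*c1*c2*c3*s2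 + 1*Ui^3*D*Di^2*c1*c2*s1 + 2*Ui^3*D*Di^2*c1*c2*c3*s2 + -1*Ui^3*D^2*Di*c1*c2*s1 + -2*Ui^3*D^2*Di*c1*c2*c3*s2 + (-1/2)*Ui^4*Di*c1*c2*t0 + (-1/2)*Ui^4*Di*c1*c2*c3*t1 + -1*Ui^4*D*c1*c2*t0 + -1*Ui^4*D*c1*c2*c3*t1 + (1/2)*Ui^4*D*Di^2*c1*c2*t0 + (1/2)*Ui^4*D*Di^2*c1*c2*c3*t1 + 1*Ui^4*D^2*Di*c1*c2*t0 + 1*Ui^4*D^2*Di*c1*c2*c3*t1 + -1*Ui^5*D*c1*c2*s1 + -2*Ui^5*D*c1*c2*c3*s2 + 1*Ui^5*D^2*Di*c1*c2*s1 + 2*Ui^5*D^2*Di*c1*c2*c3*s2 + (1/2)*Ui^6*D*c1*c2*t0 + (1/2)*Ui^6*D*c1*c2*c3*t1 + (-1/2)*Ui^6*D^2*Di*c1*c2*t0 + (-1/2)*Ui^6*D^2*Di*c1*c2*c3*t1 + -1*U*Di*c1*c2*s1 + -2*U*Di*c1*c2*c3*s2 + -1*U*D*c1*c2*s1 + -2*U*D*c1*c2*c3*s2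 + 1*U*D*Di^2*c1*c2*s1 + 2*U*D*Di^2*c1*c2*c3*s2 + 1*U*D^2*Di*c1*c2*s1 + 2*U*D^2*Di*c1*c2*c3*s2 + (-1/2)*U*Ui*Di*c1*c2*t0 + (-1/2)*U*Ui*Di*c1*c2*c3*t1 + (1/2)*U*Ui*D*c1*c2*t0 + (1/2)*U*Ui*D*c1*c2*c3*t1 + (1/2)*U*Ui*D*Di^2*c1*c2*t0 + (1/2)*U*Ui*D*Di^2*c1*c2*c3*t1 + (-1/2)*U*Ui*D^2*Di*c1*c2*t0 + (-1/2)*U*Ui*D^2*Di*c1*c2*c3*t1 + 1*U*Ui^2*Di*c1*c2*s1 + 2*U*Ui^2*Di*c1*c2*c3*s2 + -1*U*Ui^2*D*c1*c2*s1 + -2*U*Ui^2*D*c1*c2*c3*s2 + -1*U*Ui^2*D*Di^2*c1*c2*s1 + -2*U*Ui^2*D*Di^2*c1*c2*c3*s2 + 1*U*Ui^2*D^2*Di*c1*c2*s1 + 2*U*Ui^2*D^2*Di*c1*c2*c3*s2 + 1*U*Ui^3*Di*c1*c2*t0 + 1*U*Ui^3*Di*c1*c2*c3*t1 + 1*U*Ui^3*D*c1*c2*t0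 + 1*U*Ui^3*D*c1*c2*c3*t1 + -1*U*Ui^3*D*Di^2*c1*c2*t0 + -1*U*Ui^3*D*Di^2*c1*c2*c3*t1 + -1*U*Ui^3*D^2*Di*c1*c2*t0 + -1*U*Ui^3*D^2*Di*c1*c2*c3*t1 + 1*U*Ui^4*D*c1*c2*s1 + 2*U*Ui^4*D*c1*c2*c3*s2 + -1*U*Ui^4*D^2*Di*c1*c2*s1 + -2*U*Ui^4*D^2*Di*c1*c2*c3*s2 + (-1/2)*U*Ui^5*D*c1*c2*t0 + (-1/2)*U*Ui^5*D*c1*c2*c3*t1 + (1/2)*U*Ui^5*D^2*Di*c1*c2*t0 + (1/2)*U*Ui^5*D^2*Di*c1*c2*c3*t1 + (-1/2)*U^2*D*c1*c2*t0 + (-1/2)*U^2*D*c1*c2*c3*t1 + (1/2)*U^2*D^2*Di*c1*c2*t0 + (1/2)*U^2*D^2*Di*c1*c2*c3*t1 + 1*U^2*Ui*Di*c1*c2*s1 + 2*U^2*Ui*Di*c1*c2*c3*s2 + -1*U^2*Ui*D*c1*c2*s1 + -2*U^2*Ui*D*c1*c2*c3*s2 + -1*U^2*Ui*D*Di^2*c1*c2*s1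 + -2*U^2*Ui*D*Di^2*c1*c2*c3*s2 + 1*U^2*Ui*D^2*Di*c1*c2*s1 + 2*U^2*Ui*D^2*Di*c1*c2*c3*s2 + (-1/2)*U^2*Ui^2*Di*c1*c2*t0 + (-1/2)*U^2*Ui^2*Di*c1*c2*c3*t1 + (1/2)*U^2*Ui^2*D*c1*c2*t0 + (1/2)*U^2*Ui^2*D*c1*c2*c3*t1 + (1/2)*U^2*Ui^2*D*Di^2*c1*c2*t0 + (1/2)*U^2*Ui^2*D*Di^2*c1*c2*c3*t1 + (-1/2)*U^2*Ui^2*D^2*Di*c1*c2*t0 + (-1/2)*U^2*Ui^2*D^2*Di*c1*c2*c3*t1 + -1*U^3*Di*c1*c2*s1 + -2*U^3*Di*c1*c2*c3*s2 + 1*U^3*D*c1*c2*s1 + 2*U^3*D*c1*c2*c3*s2 + 1*U^3*D*Di^2*c1*c2*s1 + 2*U^3*D*Di^2*c1*c2*c3*s2 + -1*U^3*D^2*Di*c1*c2*s1 + -2*U^3*D^2*Di*c1*c2*c3*s2 + -1*U^3*Ui*Di*c1*c2*t0 + -1*U^3*Ui*Di*c1*c2*c3*t1 + -1*U^3*Ui*D*c1*c2*t0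 + -1*U^3*Ui*D*c1*c2*c3*t1 + 1*U^3*Ui*D*Di^2*c1*c2*t0 + 1*U^3*Ui*D*Di^2*c1*c2*c3*t1 + 1*U^3*Ui*D^2*Di*c1*c2*t0 + 1*U^3*Ui*D^2*Di*c1*c2*c3*t1 + 1*U^4*Di*c1*c2*t0 + 1*U^4*Di*c1*c2*c3*t1 + (1/2)*U^4*D*c1*c2*t0 + (1/2)*U^4*D*c1*c2*c3*t1 + -1*U^4*D*Di^2*c1*c2*t0 + -1*U^4*D*Di^2*c1*c2*c3*t1 + (-1/2)*U^4*D^2*Di*c1*c2*t0 + (-1/2)*U^4*D^2*Di*c1*c2*c3*t1 + -1*U^4*Ui*Di*c1*c2*s1 + -2*U^4*Ui*Di*c1*c2*c3*s2 + 1*U^4*Ui*D*Di^2*c1*c2*s1 + 2*U^4*Ui*D*Di^2*c1*c2*c3*s2 + 1*U^5*Di*c1*c2*s1 + 2*U^5*Di*c1*c2*c3*s2 + -1*U^5*D*Di^2*c1*c2*s1 + -2*U^5*D*Di^2*c1*c2*c3*s2 + (1/2)*U^5*Ui*Di*c1*c2*t0 + (1/2)*U^5*Ui*Di*c1*c2*c3*t1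 + (-1/2)*U^5*Ui*D*Di^2*c1*c2*t0 + (-1/2)*U^5*Ui*D*Di^2*c1*c2*c3*t1 + (-1/2)*U^6*Di*c1*c2*t0 + (-1/2)*U^6*Di*c1*c2*c3*t1 + (1/2)*U^6*D*Di^2*c1*c2*t0 + (1/2)*U^6*D*Di^2*c1*c2*c3*t1 + 2*Zi*Ui*Di*c1*c2^2*s2 + 1*Zi*Ui*D*c1*c2^2*s2 + -1*Zi*Ui*D*Di^4*c1*c2^2*s2 + -2*Zi*Ui*D^2*Di^3*c1*c2^2*s2 + (-1/2)*Zi*Ui^2*D*c1*c2^2*t1 + (-1/2)*Zi*Ui^2*D*Di^4*c1*c2^2*t1 + -2*Zi*Ui^3*Di*c1*c2^2*s2 + 1*Zi*Ui^3*D*Di^4*c1*c2^2*s2 + 1*Zi*Ui^3*D^3*Di^2*c1*c2^2*s2 + (1/2)*Zi*Ui^4*D*c1*c2^2*t1 + (1/2)*Zi*Ui^4*D*Di^4*c1*c2^2*t1 + (-1/2)*Zi*Ui^4*D^3*Di^2*c1*c2^2*t1 + 1*Zi*Ui^5*D*c1*c2^2*s2 + -1*Zi*Ui^5*D^3*Di^2*c1*c2^2*s2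 + -1*Zi*Ui^6*D*c1*c2^2*t1 + (1/2)*Zi*Ui^6*D^3*Di^2*c1*c2^2*t1 + -1*Zi*Ui^7*D*c1*c2^2*s2 + 1*Zi*Ui^7*D^3*Di^2*c1*c2^2*s2 + (1/2)*Zi*Ui^8*D*c1*c2^2*t1 + (-1/2)*Zi*Ui^8*D^3*Di^2*c1*c2^2*t1 + -2*Zi*U*Di*c1*c2^2*s2 + -1*Zi*U*D*c1*c2^2*s2 + 1*Zi*U*D*Di^4*c1*c2^2*s2 + 2*Zi*U*D^2*Di^3*c1*c2^2*s2 + 1*Zi*U*Ui*D*c1*c2^2*t1 + 1*Zi*U*Ui*D*Di^4*c1*c2^2*t1 + 2*Zi*U*Ui^2*Di*c1*c2^2*s2 + -1*Zi*U*Ui^2*D*Di^4*c1*c2^2*s2 + -1*Zi*U*Ui^2*D^3*Di^2*c1*c2^2*s2 + (1/2)*Zi*U*Ui^3*Di*c1*c2^2*t1 + (-1/2)*Zi*U*Ui^3*D*c1*c2^2*t1 + -1*Zi*U*Ui^3*D*Di^4*c1*c2^2*t1 + (-1/2)*Zi*U*Ui^3*D^2*Di^3*c1*c2^2*t1 + 1*Zi*U*Ui^3*D^3*Di^2*c1*c2^2*t1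 + -1*Zi*U*Ui^4*D*c1*c2^2*s2 + 1*Zi*U*Ui^4*D^3*Di^2*c1*c2^2*s2 + 1*Zi*U*Ui^5*D*c1*c2^2*t1 + (1/2)*Zi*U*Ui^5*D^2*Di^3*c1*c2^2*t1 + -1*Zi*U*Ui^5*D^3*Di^2*c1*c2^2*t1 + 1*Zi*U*Ui^6*D*c1*c2^2*s2 + -1*Zi*U*Ui^6*D^3*Di^2*c1*c2^2*s2 + (-1/2)*Zi*U*Ui^7*D*c1*c2^2*t1 + 1*Zi*U*Ui^7*D^3*Di^2*c1*c2^2*t1 + (-1/2)*Zi*U^2*D*c1*c2^2*t1 + (-1/2)*Zi*U^2*D*Di^4*c1*c2^2*t1 + -1*Zi*U^2*Ui*D*c1*c2^2*s2 + -1*Zi*U^2*Ui*D*Di^4*c1*c2^2*s2 + 2*Zi*U^2*Ui*D^2*Di^3*c1*c2^2*s2 + (1/2)*Zi*U^2*Ui^2*D*c1*c2^2*t1 + (-1/2)*Zi*U^2*Ui^2*D^3*Di^2*c1*c2^2*t1 + 2*Zi*U^2*Ui^3*Di*c1*c2^2*s2 + 1*Zi*U^2*Ui^3*D*Di^4*c1*c2^2*s2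 + -2*Zi*U^2*Ui^3*D^2*Di^3*c1*c2^2*s2 + -1*Zi*U^2*Ui^3*D^3*Di^2*c1*c2^2*s2 + (-1/2)*Zi*U^2*Ui^4*Di*c1*c2^2*t1 + (1/2)*Zi*U^2*Ui^4*D*Di^4*c1*c2^2*t1 + (1/2)*Zi*U^2*Ui^4*D^2*Di^3*c1*c2^2*t1 + 1*Zi*U^2*Ui^4*D^3*Di^2*c1*c2^2*t1 + -1*Zi*U^2*Ui^5*D*Di^4*c1*c2^2*s2 + 2*Zi*U^2*Ui^5*D^2*Di^3*c1*c2^2*s2 + -1*Zi*U^2*Ui^5*D^3*Di^2*c1*c2^2*s2 + (-1/2)*Zi*U^2*Ui^6*D*Di^4*c1*c2^2*t1 + (-1/2)*Zi*U^2*Ui^6*D^2*Di^3*c1*c2^2*t1 + 1*Zi*U^3*D*c1*c2^2*s2 + 1*Zi*U^3*D*Di^4*c1*c2^2*s2 + -2*Zi*U^3*D^2*Di^3*c1*c2^2*s2 + (-1/2)*Zi*U^3*Ui*Di*c1*c2^2*t1 + -1*Zi*U^3*Ui*D*c1*c2^2*t1 + (1/2)*Zi*U^3*Ui*D*Di^4*c1*c2^2*t1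 + (1/2)*Zi*U^3*Ui*D^2*Di^3*c1*c2^2*t1 + -2*Zi*U^3*Ui^2*Di*c1*c2^2*s2 + -1*Zi*U^3*Ui^2*D*Di^4*c1*c2^2*s2 + 2*Zi*U^3*Ui^2*D^2*Di^3*c1*c2^2*s2 + 1*Zi*U^3*Ui^2*D^3*Di^2*c1*c2^2*s2 + (-1/2)*Zi*U^3*Ui^3*Di*c1*c2^2*t1 + -1*Zi*U^3*Ui^3*D*Di^4*c1*c2^2*t1 + (-1/2)*Zi*U^3*Ui^3*D^2*Di^3*c1*c2^2*t1 + -1*Zi*U^3*Ui^3*D^3*Di^2*c1*c2^2*t1 + 1*Zi*U^3*Ui^4*D*Di^4*c1*c2^2*s2 + -2*Zi*U^3*Ui^4*D^2*Di^3*c1*c2^2*s2 + 1*Zi*U^3*Ui^4*D^3*Di^2*c1*c2^2*s2 + 1*Zi*U^3*Ui^5*D*Di^4*c1*c2^2*t1 + -1*Zi*U^3*Ui^5*D^3*Di^2*c1*c2^2*t1 + (1/2)*Zi*U^4*D*c1*c2^2*t1 + (1/2)*Zi*U^4*Ui^2*Di*c1*c2^2*t1 + 1*Zi*U^4*Ui^2*D*Di^4*c1*c2^2*t1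 + (-1/2)*Zi*U^4*Ui^2*D^2*Di^3*c1*c2^2*t1 + (1/2)*Zi*U^4*Ui^2*D^3*Di^2*c1*c2^2*t1 + -2*Zi*U^4*Ui^3*Di*c1*c2^2*s2 + 1*Zi*U^4*Ui^3*D*Di^4*c1*c2^2*s2 + 1*Zi*U^4*Ui^3*D^3*Di^2*c1*c2^2*s2 + (1/2)*Zi*U^4*Ui^4*Di*c1*c2^2*t1 + (1/2)*Zi*U^4*Ui^4*D^2*Di^3*c1*c2^2*t1 + (1/2)*Zi*U^5*Ui*Di*c1*c2^2*t1 + 2*Zi*U^5*Ui^2*Di*c1*c2^2*s2 + -1*Zi*U^5*Ui^2*D*Di^4*c1*c2^2*s2 + -1*Zi*U^5*Ui^2*D^3*Di^2*c1*c2^2*s2 + -1*Zi*U^5*Ui^3*D*Di^4*c1*c2^2*t1 + 1*Zi*U^5*Ui^3*D^3*Di^2*c1*c2^2*t1 + (-1/2)*Zi*U^6*D*Di^4*c1*c2^2*t1 + (-1/2)*Zi*U^6*Ui^2*Di*c1*c2^2*t1 + (-1/2)*Zi*U^6*Ui^2*D^3*Di^2*c1*c2^2*t1 + (1/2)*Zi*U^7*Ui*D*Di^4*c1*c2^2*t1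 + 1*Z*Ui*Di*c1^2*c2*s2 + 2*Z*Ui*D*c1^2*c2*s2 + -2*Z*Ui*D^3*Di^2*c1^2*c2*s2 + -1*Z*Ui*D^4*Di*c1^2*c2*s2 + (1/2)*Z*Ui^2*Di*c1^2*c2*t1 + (1/2)*Z*Ui^2*D^4*Di*c1^2*c2*t1 + -1*Z*Ui^3*Di*c1^2*c2*s2 + 2*Z*Ui^3*D^3*Di^2*c1^2*c2*s2 + -1*Z*Ui^3*D^4*Di*c1^2*c2*s2 + (-1/2)*Z*Ui^4*Di*c1^2*c2*t1 + (1/2)*Z*Ui^6*D^4*Di*c1^2*c2*t1 + -1*Z*U*Di*c1^2*c2*s2 + -2*Z*U*D*c1^2*c2*s2 + 2*Z*U*D^3*Di^2*c1^2*c2*s2 + 1*Z*U*D^4*Di*c1^2*c2*s2 + -1*Z*U*Ui*Di*c1^2*c2*t1 + -1*Z*U*Ui*D^4*Di*c1^2*c2*t1 + 1*Z*U*Ui^2*Di*c1^2*c2*s2 + -2*Z*U*Ui^2*D^3*Di^2*c1^2*c2*s2 + 1*Z*U*Ui^2*D^4*Di*c1^2*c2*s2 + 1*Z*U*Ui^3*Di*c1^2*c2*t1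 + (1/2)*Z*U*Ui^3*D*c1^2*c2*t1 + (-1/2)*Z*U*Ui^3*D^3*Di^2*c1^2*c2*t1 + (-1/2)*Z*U*Ui^3*D^4*Di*c1^2*c2*t1 + (-1/2)*Z*U*Ui^5*D*c1^2*c2*t1 + (-1/2)*Z*U*Ui^7*D^4*Di*c1^2*c2*t1 + (1/2)*Z*U^2*Di*c1^2*c2*t1 + (1/2)*Z*U^2*D^4*Di*c1^2*c2*t1 + -2*Z*U^2*Ui*D*c1^2*c2*s2 + 1*Z*U^2*Ui*D^2*Di^3*c1^2*c2*s2 + 1*Z*U^2*Ui*D^4*Di*c1^2*c2*s2 + (-1/2)*Z*U^2*Ui^2*Di*c1^2*c2*t1 + (1/2)*Z*U^2*Ui^2*D^2*Di^3*c1^2*c2*t1 + 2*Z*U^2*Ui^3*D*c1^2*c2*s2 + -1*Z*U^2*Ui^3*D^2*Di^3*c1^2*c2*s2 + -2*Z*U^2*Ui^3*D^3*Di^2*c1^2*c2*s2 + 1*Z*U^2*Ui^3*D^4*Di*c1^2*c2*s2 + (-1/2)*Z*U^2*Ui^4*D*c1^2*c2*t1 + (-1/2)*Z*U^2*Ui^4*D^2*Di^3*c1^2*c2*t1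 + (1/2)*Z*U^2*Ui^4*D^3*Di^2*c1^2*c2*t1 + -1*Z*U^2*Ui^4*D^4*Di*c1^2*c2*t1 + -2*Z*U^2*Ui^5*D*c1^2*c2*s2 + 1*Z*U^2*Ui^5*D^2*Di^3*c1^2*c2*s2 + 1*Z*U^2*Ui^5*D^4*Di*c1^2*c2*s2 + (1/2)*Z*U^2*Ui^6*D*c1^2*c2*t1 + (1/2)*Z*U^2*Ui^6*D^2*Di^3*c1^2*c2*t1 + 2*Z*U^3*D*c1^2*c2*s2 + -1*Z*U^3*D^2*Di^3*c1^2*c2*s2 + -1*Z*U^3*D^4*Di*c1^2*c2*s2 + (1/2)*Z*U^3*Ui*Di*c1^2*c2*t1 + (-1/2)*Z*U^3*Ui*D*c1^2*c2*t1 + -1*Z*U^3*Ui*D^2*Di^3*c1^2*c2*t1 + (1/2)*Z*U^3*Ui*D^3*Di^2*c1^2*c2*t1 + 1*Z*U^3*Ui*D^4*Di*c1^2*c2*t1 + -2*Z*U^3*Ui^2*D*c1^2*c2*s2 + 1*Z*U^3*Ui^2*D^2*Di^3*c1^2*c2*s2 + 2*Z*U^3*Ui^2*D^3*Di^2*c1^2*c2*s2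 + -1*Z*U^3*Ui^2*D^4*Di*c1^2*c2*s2 + (1/2)*Z*U^3*Ui^3*D*c1^2*c2*t1 + 1*Z*U^3*Ui^3*D^2*Di^3*c1^2*c2*t1 + (1/2)*Z*U^3*Ui^3*D^3*Di^2*c1^2*c2*t1 + 1*Z*U^3*Ui^3*D^4*Di*c1^2*c2*t1 + 2*Z*U^3*Ui^4*D*c1^2*c2*s2 + -1*Z*U^3*Ui^4*D^2*Di^3*c1^2*c2*s2 + -1*Z*U^3*Ui^4*D^4*Di*c1^2*c2*s2 + -1*Z*U^3*Ui^5*D^2*Di^3*c1^2*c2*t1 + 1*Z*U^3*Ui^5*D^4*Di*c1^2*c2*t1 + (-1/2)*Z*U^4*Di*c1^2*c2*t1 + (1/2)*Z*U^4*D^2*Di^3*c1^2*c2*t1 + (-1/2)*Z*U^4*D^4*Di*c1^2*c2*t1 + 1*Z*U^4*Ui*Di*c1^2*c2*s2 + -1*Z*U^4*Ui*D^2*Di^3*c1^2*c2*s2 + (1/2)*Z*U^4*Ui^2*D*c1^2*c2*t1 + -1*Z*U^4*Ui^2*D^2*Di^3*c1^2*c2*t1 + (-1/2)*Z*U^4*Ui^2*D^3*Di^2*c1^2*c2*t1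 + (-1/2)*Z*U^4*Ui^2*D^4*Di*c1^2*c2*t1 + -1*Z*U^4*Ui^3*D^2*Di^3*c1^2*c2*s2 + 2*Z*U^4*Ui^3*D^3*Di^2*c1^2*c2*s2 + -1*Z*U^4*Ui^3*D^4*Di*c1^2*c2*s2 + (-1/2)*Z*U^4*Ui^4*D*c1^2*c2*t1 + (-1/2)*Z*U^4*Ui^4*D^3*Di^2*c1^2*c2*t1 + -1*Z*U^5*Di*c1^2*c2*s2 + 1*Z*U^5*D^2*Di^3*c1^2*c2*s2 + -1*Z*U^5*Ui*Di*c1^2*c2*t1 + 1*Z*U^5*Ui*D^2*Di^3*c1^2*c2*t1 + (-1/2)*Z*U^5*Ui*D^3*Di^2*c1^2*c2*t1 + 1*Z*U^5*Ui^2*D^2*Di^3*c1^2*c2*s2 + -2*Z*U^5*Ui^2*D^3*Di^2*c1^2*c2*s2 + 1*Z*U^5*Ui^2*D^4*Di*c1^2*c2*s2 + 1*Z*U^5*Ui^3*D^2*Di^3*c1^2*c2*t1 + -1*Z*U^5*Ui^3*D^4*Di*c1^2*c2*t1 + 1*Z*U^6*Di*c1^2*c2*t1 + (-1/2)*Z*U^6*D^2*Di^3*c1^2*c2*t1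 + -1*Z*U^6*Ui*Di*c1^2*c2*s2 + 1*Z*U^6*Ui*D^2*Di^3*c1^2*c2*s2 + (1/2)*Z*U^6*Ui^2*D^3*Di^2*c1^2*c2*t1 + (1/2)*Z*U^6*Ui^2*D^4*Di*c1^2*c2*t1 + 1*Z*U^7*Di*c1^2*c2*s2 + -1*Z*U^7*D^2*Di^3*c1^2*c2*s2 + (1/2)*Z*U^7*Ui*Di*c1^2*c2*t1 + -1*Z*U^7*Ui*D^2*Di^3*c1^2*c2*t1 + (-1/2)*Z*U^8*Di*c1^2*c2*t1 + (1/2)*Z*U^8*D^2*Di^3*c1^2*c2*t1)) * hZr +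
        ((-1*Di*c1*c2*t0 + -1*Di*c1*c2*c3*t1 + 1*D*c1*c2*t0 + 1*D*c1*c2*c3*t1 + 1*D*Di^2*c1*c2*t0 + 1*D*Di^2*c1*c2*c3*t1 + -1*D^2*Di*c1*c2*t0 + -1*D^2*Di*c1*c2*c3*t1 + 1*Ui*Di*c1*c2*s1 + 2*Ui*Di*c1*c2*c3*s2 + -1*Ui*D*c1*c2*s1 + -2*Ui*D*c1*c2*c3*s2 + -1*Ui*D*Di^2*c1*c2*s1 + -2*Ui*D*Di^2*c1*c2*c3*s2 + 1*Ui*D^2*Di*c1*c2*s1 + 2*Ui*D^2*Di*c1*c2*c3*s2 + 1*Ui^2*Di*c1*c2*t0 + 1*Ui^2*Di*c1*c2*c3*t1 + 1*Ui^2*D*c1*c2*t0 + 1*Ui^2*D*c1*c2*c3*t1 + -1*Ui^2*D*Di^2*c1*c2*t0 + -1*Ui^2*D*Di^2*c1*c2*c3*t1 + -1*Ui^2*D^2*Di*c1*c2*t0 + -1*Ui^2*D^2*Di*c1*c2*c3*t1 + 1*Ui^3*D*c1*c2*s1 + 2*Ui^3*D*c1*c2*c3*s2 + -1*Ui^3*D^2*Di*c1*c2*s1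 + -2*Ui^3*D^2*Di*c1*c2*c3*s2 + (-1/2)*Ui^4*D*c1*c2*t0 + (-1/2)*Ui^4*D*c1*c2*c3*t1 + (1/2)*Ui^4*D^2*Di*c1*c2*t0 + (1/2)*Ui^4*D^2*Di*c1*c2*c3*t1 + 1*U*Di*c1*c2*s1 + 2*U*Di*c1*c2*c3*s2 + -1*U*D*c1*c2*s1 + -2*U*D*c1*c2*c3*s2 + -1*U*D*Di^2*c1*c2*s1 + -2*U*D*Di^2*c1*c2*c3*s2 + 1*U*D^2*Di*c1*c2*s1 + 2*U*D^2*Di*c1*c2*c3*s2 + (-1/2)*U*Ui*Di*c1*c2*t0 + (-1/2)*U*Ui*Di*c1*c2*c3*t1 + (1/2)*U*Ui*D*c1*c2*t0 + (1/2)*U*Ui*D*c1*c2*c3*t1 + (1/2)*U*Ui*D*Di^2*c1*c2*t0 + (1/2)*U*Ui*D*Di^2*c1*c2*c3*t1 + (-1/2)*U*Ui*D^2*Di*c1*c2*t0 + (-1/2)*U*Ui*D^2*Di*c1*c2*c3*t1 + -1*U^2*Di*c1*c2*t0 + -1*U^2*Di*c1*c2*c3*t1 + -1*U^2*D*c1*c2*t0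 + -1*U^2*D*c1*c2*c3*t1 + 1*U^2*D*Di^2*c1*c2*t0 + 1*U^2*D*Di^2*c1*c2*c3*t1 + 1*U^2*D^2*Di*c1*c2*t0 + 1*U^2*D^2*Di*c1*c2*c3*t1 + -1*U^3*Di*c1*c2*s1 + -2*U^3*Di*c1*c2*c3*s2 + 1*U^3*D*Di^2*c1*c2*s1 + 2*U^3*D*Di^2*c1*c2*c3*s2 + (1/2)*U^4*Di*c1*c2*t0 + (1/2)*U^4*Di*c1*c2*c3*t1 + (-1/2)*U^4*D*Di^2*c1*c2*t0 + (-1/2)*U^4*D*Di^2*c1*c2*c3*t1 + (3/2)*Zi*D*c1*c2^2*t1 + (-3/2)*Zi*D^3*Di^2*c1*c2^2*t1 + 4*Zi*Ui*Di*c1*c2^2*s2 + 1*Zi*Ui*D*Di^4*c1*c2^2*s2 + -4*Zi*Ui*D^2*Di^3*c1*c2^2*s2 + -1*Zi*Ui*D^3*Di^2*c1*c2^2*s2 + (-1/2)*Zi*Ui^2*D*c1*c2^2*t1 + (1/2)*Zi*Ui^2*D*Di^4*c1*c2^2*t1 + 1*Zi*Ui^2*D^3*Di^2*c1*c2^2*t1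 + -1*Zi*Ui^3*D*c1*c2^2*s2 + -1*Zi*Ui^3*D*Di^4*c1*c2^2*s2 + 2*Zi*Ui^3*D^2*Di^3*c1*c2^2*s2 + 1*Zi*Ui^4*D*c1*c2^2*t1 + (-1/2)*Zi*Ui^4*D*Di^4*c1*c2^2*t1 + -1*Zi*Ui^4*D^3*Di^2*c1*c2^2*t1 + 1*Zi*Ui^5*D*c1*c2^2*s2 + -1*Zi*Ui^5*D^3*Di^2*c1*c2^2*s2 + (-1/2)*Zi*Ui^6*D*c1*c2^2*t1 + 1*Zi*Ui^6*D^3*Di^2*c1*c2^2*t1 + -4*Zi*U*Di*c1*c2^2*s2 + -1*Zi*U*D*c1*c2^2*s2 + -1*Zi*U*D*Di^4*c1*c2^2*s2 + 4*Zi*U*D^2*Di^3*c1*c2^2*s2 + 2*Zi*U*D^3*Di^2*c1*c2^2*s2 + (1/2)*Zi*U*Ui*D*c1*c2^2*t1 + -1*Zi*U*Ui*D*Di^4*c1*c2^2*t1 + (-3/2)*Zi*U*Ui*D^3*Di^2*c1*c2^2*t1 + 2*Zi*U*Ui^2*Di*c1*c2^2*s2 + 2*Zi*U*Ui^2*D*Di^4*c1*c2^2*s2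 + -4*Zi*U*Ui^2*D^2*Di^3*c1*c2^2*s2 + (-1/2)*Zi*U*Ui^3*Di*c1*c2^2*t1 + (3/2)*Zi*U*Ui^3*D*Di^4*c1*c2^2*t1 + (1/2)*Zi*U*Ui^3*D^2*Di^3*c1*c2^2*t1 + -1*Zi*U*Ui^4*D*Di^4*c1*c2^2*s2 + 2*Zi*U*Ui^4*D^2*Di^3*c1*c2^2*s2 + -1*Zi*U*Ui^4*D^3*Di^2*c1*c2^2*s2 + (-1/2)*Zi*U*Ui^5*D*Di^4*c1*c2^2*t1 + (-1/2)*Zi*U*Ui^5*D^2*Di^3*c1*c2^2*t1 + -1*Zi*U^2*D*c1*c2^2*t1 + (1/2)*Zi*U^2*D*Di^4*c1*c2^2*t1 + (3/2)*Zi*U^2*D^3*Di^2*c1*c2^2*t1 + -4*Zi*U^2*Ui*Di*c1*c2^2*s2 + 2*Zi*U^2*Ui*D^2*Di^3*c1*c2^2*s2 + 2*Zi*U^2*Ui*D^3*Di^2*c1*c2^2*s2 + -1*Zi*U^2*Ui^2*D*Di^4*c1*c2^2*t1 + -1*Zi*U^2*Ui^2*D^3*Di^2*c1*c2^2*t1 +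 1*Zi*U^2*Ui^3*D*Di^4*c1*c2^2*s2 + -2*Zi*U^2*Ui^3*D^2*Di^3*c1*c2^2*s2 + 1*Zi*U^2*Ui^3*D^3*Di^2*c1*c2^2*s2 + 1*Zi*U^2*Ui^4*D*Di^4*c1*c2^2*t1 + -1*Zi*U^2*Ui^4*D^3*Di^2*c1*c2^2*t1 + 2*Zi*U^3*Di*c1*c2^2*s2 + -1*Zi*U^3*D*Di^4*c1*c2^2*s2 + -1*Zi*U^3*D^3*Di^2*c1*c2^2*s2 + (1/2)*Zi*U^3*Ui*Di*c1*c2^2*t1 + (-1/2)*Zi*U^3*Ui*D^2*Di^3*c1*c2^2*t1 + (3/2)*Zi*U^3*Ui*D^3*Di^2*c1*c2^2*t1 + -2*Zi*U^3*Ui^2*Di*c1*c2^2*s2 + 1*Zi*U^3*Ui^2*D*Di^4*c1*c2^2*s2 + 1*Zi*U^3*Ui^2*D^3*Di^2*c1*c2^2*s2 + (1/2)*Zi*U^3*Ui^3*Di*c1*c2^2*t1 + (1/2)*Zi*U^3*Ui^3*D^2*Di^3*c1*c2^2*t1 + (-1/2)*Zi*U^4*D^3*Di^2*c1*c2^2*t1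 + 2*Zi*U^4*Ui*Di*c1*c2^2*s2 + -1*Zi*U^4*Ui*D*Di^4*c1*c2^2*s2 + -1*Zi*U^4*Ui*D^3*Di^2*c1*c2^2*s2 + -1*Zi*U^4*Ui^2*D*Di^4*c1*c2^2*t1 + 1*Zi*U^4*Ui^2*D^3*Di^2*c1*c2^2*t1 + (-1/2)*Zi*U^5*Ui*Di*c1*c2^2*t1 + (-1/2)*Zi*U^5*Ui*D^3*Di^2*c1*c2^2*t1 + (1/2)*Zi*U^6*D*Di^4*c1*c2^2*t1 + -1*Zi^2*Ui*Di*c2^2*s1 + -2*Zi^2*Ui*Di*c2^2*c3*s2 + 1*Zi^2*Ui*Di^3*c2^2*s1 + 2*Zi^2*Ui*Di^3*c2^2*c3*s2 + (1/2)*Zi^2*Ui^2*Di^3*c2^2*t0 + (1/2)*Zi^2*Ui^2*Di^3*c2^2*c3*t1 + 1*Zi^2*U*Di*c2^2*s1 + 2*Zi^2*U*Di*c2^2*c3*s2 + -1*Zi^2*U*Di^3*c2^2*s1 + -2*Zi^2*U*Di^3*c2^2*c3*s2 + (-1/2)*Zi^2*U*Ui*Di*c2^2*t0 + (-1/2)*Zi^2*U*Ui*Di*c2^2*c3*t1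 + (-1/2)*Zi^2*U*Ui*Di^3*c2^2*t0 + (-1/2)*Zi^2*U*Ui*Di^3*c2^2*c3*t1 + -1*Zi^2*U*Ui^2*Di*c2^2*s1 + -2*Zi^2*U*Ui^2*Di*c2^2*c3*s2 + 1*Zi^2*U*Ui^2*Di^3*c2^2*s1 + 2*Zi^2*U*Ui^2*Di^3*c2^2*c3*s2 + (1/2)*Zi^2*U*Ui^3*Di*c2^2*t0 + (1/2)*Zi^2*U*Ui^3*Di*c2^2*c3*t1 + (1/2)*Zi^2*U^2*Di*c2^2*t0 + (1/2)*Zi^2*U^2*Di*c2^2*c3*t1 + 1*Zi^2*U^2*Ui*Di*c2^2*s1 + 2*Zi^2*U^2*Ui*Di*c2^2*c3*s2 + -1*Zi^2*U^2*Ui*Di^3*c2^2*s1 + -2*Zi^2*U^2*Ui*Di^3*c2^2*c3*s2 + (-1/2)*Zi^2*U^2*Ui^2*Di*c2^2*t0 + (-1/2)*Zi^2*U^2*Ui^2*Di*c2^2*c3*t1 + (-1/2)*Zi^2*U^2*Ui^2*Di^3*c2^2*t0 + (-1/2)*Zi^2*U^2*Ui^2*Di^3*c2^2*c3*t1 + (1/2)*Zi^2*U^3*Ui*Di^3*c2^2*t0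 + (1/2)*Zi^2*U^3*Ui*Di^3*c2^2*c3*t1 + 2*Zi^3*Di*c2^3*t1 + -2*Zi^3*D^2*Di^3*c2^3*t1 + 2*Zi^3*Ui*Di*c2^3*s2 + 1*Zi^3*Ui*Di^5*c2^3*s2 + -3*Zi^3*Ui*D^2*Di^3*c2^3*s2 + (-5/2)*Zi^3*Ui^2*Di*c2^3*t1 + (1/2)*Zi^3*Ui^2*Di^5*c2^3*t1 + 3*Zi^3*Ui^2*D^2*Di^3*c2^3*t1 + -2*Zi^3*Ui^3*Di*c2^3*s2 + 2*Zi^3*Ui^3*D^2*Di^3*c2^3*s2 + 1*Zi^3*Ui^4*Di*c2^3*t1 + (-3/2)*Zi^3*Ui^4*D^2*Di^3*c2^3*t1 + -1*Zi^3*U*Di^5*c2^3*s2 + 1*Zi^3*U*D^2*Di^3*c2^3*s2 + 1*Zi^3*U*Ui*Di*c2^3*t1 + -1*Zi^3*U*Ui*Di^5*c2^3*t1 + -2*Zi^3*U*Ui*D^2*Di^3*c2^3*t1 + 1*Zi^3*U*Ui^2*Di*c2^3*s2 + 1*Zi^3*U*Ui^2*Di^5*c2^3*s2 + -2*Zi^3*U*Ui^2*D^2*Di^3*c2^3*s2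 + -1*Zi^3*U*Ui^3*Di*c2^3*t1 + (1/2)*Zi^3*U*Ui^3*Di^5*c2^3*t1 + 2*Zi^3*U*Ui^3*D^2*Di^3*c2^3*t1 + -1*Zi^3*U*Ui^4*Di*c2^3*s2 + 1*Zi^3*U*Ui^4*D^2*Di^3*c2^3*s2 + (1/2)*Zi^3*U*Ui^5*Di*c2^3*t1 + (-1/2)*Zi^3*U*Ui^5*D^2*Di^3*c2^3*t1 + (1/2)*Zi^3*U^2*Di^5*c2^3*t1 + (1/2)*Zi^3*U^2*D^2*Di^3*c2^3*t1 + -1*Zi^3*U^2*Ui*Di^5*c2^3*s2 + 1*Zi^3*U^2*Ui*D^2*Di^3*c2^3*s2 + (1/2)*Zi^3*U^2*Ui^2*Di*c2^3*t1 + -1*Zi^3*U^2*Ui^2*Di^5*c2^3*t1 + (-3/2)*Zi^3*U^2*Ui^2*D^2*Di^3*c2^3*t1 + 1*Zi^3*U^2*Ui^3*Di*c2^3*s2 + -1*Zi^3*U^2*Ui^3*D^2*Di^3*c2^3*s2 + (-1/2)*Zi^3*U^2*Ui^4*Di*c2^3*t1 + 1*Zi^3*U^2*Ui^4*D^2*Di^3*c2^3*t1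 + 1*Zi^3*U^3*Ui*Di^5*c2^3*t1 + (1/2)*Zi^3*U^3*Ui*D^2*Di^3*c2^3*t1 + (-1/2)*Zi^3*U^3*Ui^3*Di^5*c2^3*t1 + (-1/2)*Zi^3*U^3*Ui^3*D^2*Di^3*c2^3*t1 + (-1/2)*Zi^3*U^4*Di^5*c2^3*t1 + (1/2)*Zi^3*U^4*Ui^2*Di^5*c2^3*t1 + (-3/2)*Z*Di*c1^2*c2*t1 + (3/2)*Z*D^2*Di^3*c1^2*c2*t1 + 1*Z*Ui*Di*c1^2*c2*s2 + 4*Z*Ui*D*c1^2*c2*s2 + -2*Z*Ui*D^2*Di^3*c1^2*c2*s2 + -4*Z*Ui*D^3*Di^2*c1^2*c2*s2 + 1*Z*Ui*D^4*Di*c1^2*c2*s2 + 1*Z*Ui^2*Di*c1^2*c2*t1 + (-3/2)*Z*Ui^2*D^2*Di^3*c1^2*c2*t1 + (-1/2)*Z*Ui^2*D^4*Di*c1^2*c2*t1 + -2*Z*Ui^3*D*c1^2*c2*s2 + 1*Z*Ui^3*D^2*Di^3*c1^2*c2*s2 + 1*Z*Ui^3*D^4*Di*c1^2*c2*s2 +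 (1/2)*Z*Ui^4*D^2*Di^3*c1^2*c2*t1 + (-1/2)*Z*Ui^6*D^4*Di*c1^2*c2*t1 + -4*Z*U*D*c1^2*c2*s2 + 1*Z*U*D^2*Di^3*c1^2*c2*s2 + 4*Z*U*D^3*Di^2*c1^2*c2*s2 + -1*Z*U*D^4*Di*c1^2*c2*s2 + (-1/2)*Z*U*Ui*Di*c1^2*c2*t1 + (3/2)*Z*U*Ui*D^2*Di^3*c1^2*c2*t1 + 1*Z*U*Ui*D^4*Di*c1^2*c2*t1 + 4*Z*U*Ui^2*D*c1^2*c2*s2 + -2*Z*U*Ui^2*D^2*Di^3*c1^2*c2*s2 + -2*Z*U*Ui^2*D^3*Di^2*c1^2*c2*s2 + (-1/2)*Z*U*Ui^3*D*c1^2*c2*t1 + (-3/2)*Z*U*Ui^3*D^2*Di^3*c1^2*c2*t1 + (1/2)*Z*U*Ui^3*D^3*Di^2*c1^2*c2*t1 + -2*Z*U*Ui^4*D*c1^2*c2*s2 + 1*Z*U*Ui^4*D^2*Di^3*c1^2*c2*s2 + 1*Z*U*Ui^4*D^4*Di*c1^2*c2*s2 + (1/2)*Z*U*Ui^5*D*c1^2*c2*t1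 + (1/2)*Z*U*Ui^5*D^2*Di^3*c1^2*c2*t1 + (1/2)*Z*U^2*Di*c1^2*c2*t1 + -1*Z*U^2*D^2*Di^3*c1^2*c2*t1 + (-1/2)*Z*U^2*D^4*Di*c1^2*c2*t1 + -2*Z*U^2*Ui*D*c1^2*c2*s2 + 4*Z*U^2*Ui*D^3*Di^2*c1^2*c2*s2 + -2*Z*U^2*Ui*D^4*Di*c1^2*c2*s2 + 1*Z*U^2*Ui^2*D^2*Di^3*c1^2*c2*t1 + 1*Z*U^2*Ui^2*D^4*Di*c1^2*c2*t1 + 2*Z*U^2*Ui^3*D*c1^2*c2*s2 + -1*Z*U^2*Ui^3*D^2*Di^3*c1^2*c2*s2 + -1*Z*U^2*Ui^3*D^4*Di*c1^2*c2*s2 + -1*Z*U^2*Ui^4*D^2*Di^3*c1^2*c2*t1 + 1*Z*U^2*Ui^4*D^4*Di*c1^2*c2*t1 + 1*Z*U^3*Di*c1^2*c2*s2 + -2*Z*U^3*D^3*Di^2*c1^2*c2*s2 + 1*Z*U^3*D^4*Di*c1^2*c2*s2 + (1/2)*Z*U^3*Ui*D*c1^2*c2*t1 + (-1/2)*Z*U^3*Ui*D^3*Di^2*c1^2*c2*t1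 + (-3/2)*Z*U^3*Ui*D^4*Di*c1^2*c2*t1 + -1*Z*U^3*Ui^2*D^2*Di^3*c1^2*c2*s2 + 2*Z*U^3*Ui^2*D^3*Di^2*c1^2*c2*s2 + -1*Z*U^3*Ui^2*D^4*Di*c1^2*c2*s2 + (-1/2)*Z*U^3*Ui^3*D*c1^2*c2*t1 + (-1/2)*Z*U^3*Ui^3*D^3*Di^2*c1^2*c2*t1 + -1*Z*U^4*Di*c1^2*c2*t1 + 1*Z*U^4*D^2*Di^3*c1^2*c2*t1 + (1/2)*Z*U^4*D^4*Di*c1^2*c2*t1 + 1*Z*U^4*Ui*D^2*Di^3*c1^2*c2*s2 + -2*Z*U^4*Ui*D^3*Di^2*c1^2*c2*s2 + 1*Z*U^4*Ui*D^4*Di*c1^2*c2*s2 + 1*Z*U^4*Ui^2*D^2*Di^3*c1^2*c2*t1 + -1*Z*U^4*Ui^2*D^4*Di*c1^2*c2*t1 + -1*Z*U^5*Di*c1^2*c2*s2 + 1*Z*U^5*D^2*Di^3*c1^2*c2*s2 + (1/2)*Z*U^5*Ui*D^3*Di^2*c1^2*c2*t1 + (1/2)*Z*U^5*Ui*D^4*Di*c1^2*c2*t1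 + (1/2)*Z*U^6*Di*c1^2*c2*t1 + -1*Z*U^6*D^2*Di^3*c1^2*c2*t1 + -1*Z^2*Ui*D*c1^2*s1 + -2*Z^2*Ui*D*c1^2*c3*s2 + 1*Z^2*Ui*D^3*c1^2*s1 + 2*Z^2*Ui*D^3*c1^2*c3*s2 + (-1/2)*Z^2*Ui^2*D*c1^2*t0 + (-1/2)*Z^2*Ui^2*D*c1^2*c3*t1 + 1*Z^2*U*D*c1^2*s1 + 2*Z^2*U*D*c1^2*c3*s2 + -1*Z^2*U*D^3*c1^2*s1 + -2*Z^2*U*D^3*c1^2*c3*s2 + (1/2)*Z^2*U*Ui*D*c1^2*t0 + (1/2)*Z^2*U*Ui*D*c1^2*c3*t1 + (1/2)*Z^2*U*Ui*D^3*c1^2*t0 + (1/2)*Z^2*U*Ui*D^3*c1^2*c3*t1 + -1*Z^2*U*Ui^2*D*c1^2*s1 + -2*Z^2*U*Ui^2*D*c1^2*c3*s2 + 1*Z^2*U*Ui^2*D^3*c1^2*s1 + 2*Z^2*U*Ui^2*D^3*c1^2*c3*s2 + (-1/2)*Z^2*U*Ui^3*D^3*c1^2*t0 + (-1/2)*Z^2*U*Ui^3*D^3*c1^2*c3*t1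 + (-1/2)*Z^2*U^2*D^3*c1^2*t0 + (-1/2)*Z^2*U^2*D^3*c1^2*c3*t1 + 1*Z^2*U^2*Ui*D*c1^2*s1 + 2*Z^2*U^2*Ui*D*c1^2*c3*s2 + -1*Z^2*U^2*Ui*D^3*c1^2*s1 + -2*Z^2*U^2*Ui*D^3*c1^2*c3*s2 + (1/2)*Z^2*U^2*Ui^2*D*c1^2*t0 + (1/2)*Z^2*U^2*Ui^2*D*c1^2*c3*t1 + (1/2)*Z^2*U^2*Ui^2*D^3*c1^2*t0 + (1/2)*Z^2*U^2*Ui^2*D^3*c1^2*c3*t1 + (-1/2)*Z^2*U^3*Ui*D*c1^2*t0 + (-1/2)*Z^2*U^3*Ui*D*c1^2*c3*t1 + -2*Z^3*D*c1^3*t1 + 2*Z^3*D^3*Di^2*c1^3*t1 + -1*Z^3*Ui*D^3*Di^2*c1^3*s2 + 1*Z^3*Ui*D^5*c1^3*s2 + (-1/2)*Z^3*Ui^2*D^3*Di^2*c1^3*t1 + (-1/2)*Z^3*Ui^2*D^5*c1^3*t1 + (1/2)*Z^3*Ui^4*D^5*c1^3*t1 + -2*Z^3*U*D*c1^3*s2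 + 3*Z^3*U*D^3*Di^2*c1^3*s2 + -1*Z^3*U*D^5*c1^3*s2 + -1*Z^3*U*Ui*D*c1^3*t1 + 2*Z^3*U*Ui*D^3*Di^2*c1^3*t1 + 1*Z^3*U*Ui*D^5*c1^3*t1 + -1*Z^3*U*Ui^2*D^3*Di^2*c1^3*s2 + 1*Z^3*U*Ui^2*D^5*c1^3*s2 + (-1/2)*Z^3*U*Ui^3*D^3*Di^2*c1^3*t1 + -1*Z^3*U*Ui^3*D^5*c1^3*t1 + (5/2)*Z^3*U^2*D*c1^3*t1 + -3*Z^3*U^2*D^3*Di^2*c1^3*t1 + (-1/2)*Z^3*U^2*D^5*c1^3*t1 + -1*Z^3*U^2*Ui*D*c1^3*s2 + 2*Z^3*U^2*Ui*D^3*Di^2*c1^3*s2 + -1*Z^3*U^2*Ui*D^5*c1^3*s2 + (-1/2)*Z^3*U^2*Ui^2*D*c1^3*t1 + (3/2)*Z^3*U^2*Ui^2*D^3*Di^2*c1^3*t1 + 1*Z^3*U^2*Ui^2*D^5*c1^3*t1 + (-1/2)*Z^3*U^2*Ui^4*D^5*c1^3*t1 + 2*Z^3*U^3*D*c1^3*s2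 + -2*Z^3*U^3*D^3*Di^2*c1^3*s2 + 1*Z^3*U^3*Ui*D*c1^3*t1 + -2*Z^3*U^3*Ui*D^3*Di^2*c1^3*t1 + (-1/2)*Z^3*U^3*Ui*D^5*c1^3*t1 + -1*Z^3*U^3*Ui^2*D*c1^3*s2 + 1*Z^3*U^3*Ui^2*D^3*Di^2*c1^3*s2 + (1/2)*Z^3*U^3*Ui^3*D^3*Di^2*c1^3*t1 + (1/2)*Z^3*U^3*Ui^3*D^5*c1^3*t1 + -1*Z^3*U^4*D*c1^3*t1 + (3/2)*Z^3*U^4*D^3*Di^2*c1^3*t1 + 1*Z^3*U^4*Ui*D*c1^3*s2 + -1*Z^3*U^4*Ui*D^3*Di^2*c1^3*s2 + (1/2)*Z^3*U^4*Ui^2*D*c1^3*t1 + -1*Z^3*U^4*Ui^2*D^3*Di^2*c1^3*t1 + (-1/2)*Z^3*U^5*Ui*D*c1^3*t1 + (1/2)*Z^3*U^5*Ui*D^3*Di^2*c1^3*t1)) * hUr +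
        ((1*Di*c1*c2*t0 + 1*Di*c1*c2*c3*t1 + -1*D*c1*c2*t0 + -1*D*c1*c2*c3*t1 + -2*Ui*Di*c1*c2*s1 + -4*Ui*Di*c1*c2*c3*s2 + (-3/2)*Ui^2*Di*c1*c2*t0 + (-3/2)*Ui^2*Di*c1*c2*c3*t1 + -1*Ui^2*D*c1*c2*t0 + -1*Ui^2*D*c1*c2*c3*t1 + 1*Ui^3*Di*c1*c2*s1 + 2*Ui^3*Di*c1*c2*c3*s2 + -2*Ui^3*D*c1*c2*s1 + -4*Ui^3*D*c1*c2*c3*s2 + (1/2)*Ui^4*Di*c1*c2*t0 + (1/2)*Ui^4*Di*c1*c2*c3*t1 + (3/2)*Ui^4*D*c1*c2*t0 + (3/2)*Ui^4*D*c1*c2*c3*t1 + 1*Ui^5*D*c1*c2*s1 + 2*Ui^5*D*c1*c2*c3*s2 + (-1/2)*Ui^6*D*c1*c2*t0 + (-1/2)*Ui^6*D*c1*c2*c3*t1 + 2*U*D*c1*c2*s1 + 4*U*D*c1*c2*c3*s2 + 1*U^2*Di*c1*c2*t0 + 1*U^2*Di*c1*c2*c3*t1 + (3/2)*U^2*D*c1*c2*t0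 + (3/2)*U^2*D*c1*c2*c3*t1 + 2*U^3*Di*c1*c2*s1 + 4*U^3*Di*c1*c2*c3*s2 + -1*U^3*D*c1*c2*s1 + -2*U^3*D*c1*c2*c3*s2 + (-3/2)*U^4*Di*c1*c2*t0 + (-3/2)*U^4*Di*c1*c2*c3*t1 + (-1/2)*U^4*D*c1*c2*t0 + (-1/2)*U^4*D*c1*c2*c3*t1 + -1*U^5*Di*c1*c2*s1 + -2*U^5*Di*c1*c2*c3*s2 + (1/2)*U^6*Di*c1*c2*t0 + (1/2)*U^6*Di*c1*c2*c3*t1 + (-3/2)*Zi*D*c1*c2^2*t1 + (-3/2)*Zi*D^2*Di*c1*c2^2*t1 + -6*Zi*Ui*Di*c1*c2^2*s2 + -1*Zi*Ui*D*c1*c2^2*s2 + -6*Zi*Ui*D*Di^2*c1*c2^2*s2 + -1*Zi*Ui*D^2*Di*c1*c2^2*s2 + 1*Zi*Ui^2*D*c1*c2^2*t1 + 1*Zi*Ui^2*D^2*Di*c1*c2^2*t1 + 2*Zi*Ui^3*Di*c1*c2^2*s2 + 1*Zi*Ui^3*D*c1*c2^2*s2 + 2*Zi*Ui^3*D*Di^2*c1*c2^2*s2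 + 1*Zi*Ui^3*D^2*Di*c1*c2^2*s2 + (-3/2)*Zi*Ui^4*D*c1*c2^2*t1 + (-3/2)*Zi*Ui^4*D^2*Di*c1*c2^2*t1 + -2*Zi*Ui^5*D*c1*c2^2*s2 + -2*Zi*Ui^5*D^2*Di*c1*c2^2*s2 + (3/2)*Zi*Ui^6*D*c1*c2^2*t1 + (3/2)*Zi*Ui^6*D^2*Di*c1*c2^2*t1 + 1*Zi*Ui^7*D*c1*c2^2*s2 + 1*Zi*Ui^7*D^2*Di*c1*c2^2*s2 + (-1/2)*Zi*Ui^8*D*c1*c2^2*t1 + (-1/2)*Zi*Ui^8*D^2*Di*c1*c2^2*t1 + 6*Zi*U*Di*c1*c2^2*s2 + 2*Zi*U*D*c1*c2^2*s2 + 6*Zi*U*D*Di^2*c1*c2^2*s2 + 2*Zi*U*D^2*Di*c1*c2^2*s2 + (3/2)*Zi*U^2*D*c1*c2^2*t1 + (3/2)*Zi*U^2*D^2*Di*c1*c2^2*t1 + -2*Zi*U^3*Di*c1*c2^2*s2 + -1*Zi*U^3*D*c1*c2^2*s2 + -2*Zi*U^3*D*Di^2*c1*c2^2*s2 + -1*Zi*U^3*D^2*Di*c1*c2^2*s2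 + (-1/2)*Zi*U^4*D*c1*c2^2*t1 + (-1/2)*Zi*U^4*D^2*Di*c1*c2^2*t1 + -2*Zi^3*Di*c2^3*t1 + -2*Zi^3*D*Di^2*c2^3*t1 + -3*Zi^3*Ui*Di*c2^3*s2 + -3*Zi^3*Ui*D*Di^2*c2^3*s2 + 3*Zi^3*Ui^2*Di*c2^3*t1 + 3*Zi^3*Ui^2*D*Di^2*c2^3*t1 + 3*Zi^3*Ui^3*Di*c2^3*s2 + 3*Zi^3*Ui^3*D*Di^2*c2^3*s2 + -2*Zi^3*Ui^4*Di*c2^3*t1 + -2*Zi^3*Ui^4*D*Di^2*c2^3*t1 + -1*Zi^3*Ui^5*Di*c2^3*s2 + -1*Zi^3*Ui^5*D*Di^2*c2^3*s2 + (1/2)*Zi^3*Ui^6*Di*c2^3*t1 + (1/2)*Zi^3*Ui^6*D*Di^2*c2^3*t1 + 1*Zi^3*U*Di*c2^3*s2 + 1*Zi^3*U*D*Di^2*c2^3*s2 + (1/2)*Zi^3*U^2*Di*c2^3*t1 + (1/2)*Zi^3*U^2*D*Di^2*c2^3*t1 + (3/2)*Z*Di*c1^2*c2*t1 + (3/2)*Z*D*Di^2*c1^2*c2*t1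 + -2*Z*Ui*Di*c1^2*c2*s2 + -6*Z*Ui*D*c1^2*c2*s2 + -2*Z*Ui*D*Di^2*c1^2*c2*s2 + -6*Z*Ui*D^2*Di*c1^2*c2*s2 + (-3/2)*Z*Ui^2*Di*c1^2*c2*t1 + (-3/2)*Z*Ui^2*D*Di^2*c1^2*c2*t1 + 1*Z*Ui^3*Di*c1^2*c2*s2 + 2*Z*Ui^3*D*c1^2*c2*s2 + 1*Z*Ui^3*D*Di^2*c1^2*c2*s2 + 2*Z*Ui^3*D^2*Di*c1^2*c2*s2 + (1/2)*Z*Ui^4*Di*c1^2*c2*t1 + (1/2)*Z*Ui^4*D*Di^2*c1^2*c2*t1 + 1*Z*U*Di*c1^2*c2*s2 + 6*Z*U*D*c1^2*c2*s2 + 1*Z*U*D*Di^2*c1^2*c2*s2 + 6*Z*U*D^2*Di*c1^2*c2*s2 + -1*Z*U^2*Di*c1^2*c2*t1 + -1*Z*U^2*D*Di^2*c1^2*c2*t1 + -1*Z*U^3*Di*c1^2*c2*s2 + -2*Z*U^3*D*c1^2*c2*s2 + -1*Z*U^3*D*Di^2*c1^2*c2*s2 + -2*Z*U^3*D^2*Di*c1^2*c2*s2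 + (3/2)*Z*U^4*Di*c1^2*c2*t1 + (3/2)*Z*U^4*D*Di^2*c1^2*c2*t1 + 2*Z*U^5*Di*c1^2*c2*s2 + 2*Z*U^5*D*Di^2*c1^2*c2*s2 + (-3/2)*Z*U^6*Di*c1^2*c2*t1 + (-3/2)*Z*U^6*D*Di^2*c1^2*c2*t1 + -1*Z*U^7*Di*c1^2*c2*s2 + -1*Z*U^7*D*Di^2*c1^2*c2*s2 + (1/2)*Z*U^8*Di*c1^2*c2*t1 + (1/2)*Z*U^8*D*Di^2*c1^2*c2*t1 + 2*Z^3*D*c1^3*t1 + 2*Z^3*D^2*Di*c1^3*t1 + -1*Z^3*Ui*D*c1^3*s2 + -1*Z^3*Ui*D^2*Di*c1^3*s2 + (-1/2)*Z^3*Ui^2*D*c1^3*t1 + (-1/2)*Z^3*Ui^2*D^2*Di*c1^3*t1 + 3*Z^3*U*D*c1^3*s2 + 3*Z^3*U*D^2*Di*c1^3*s2 + -3*Z^3*U^2*D*c1^3*t1 + -3*Z^3*U^2*D^2*Di*c1^3*t1 + -3*Z^3*U^3*D*c1^3*s2 + -3*Z^3*U^3*D^2*Di*c1^3*s2 + 2*Z^3*U^4*D*c1^3*t1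 + 2*Z^3*U^4*D^2*Di*c1^3*t1 + 1*Z^3*U^5*D*c1^3*s2 + 1*Z^3*U^5*D^2*Di*c1^3*s2 + (-1/2)*Z^3*U^6*D*c1^3*t1 + (-1/2)*Z^3*U^6*D^2*Di*c1^3*t1)) * hDr +
        ((1*Zi^3*Ui*Di^3*c2^3*s2 + -1*Zi^3*Ui^3*Di^3*c2^3*s2 + -1*Zi^3*U*Di^3*c2^3*s2 + 1*Zi^3*U*Ui^2*Di^3*c2^3*s2 + -1*Zi^3*U^2*Ui*Di^3*c2^3*s2 + 1*Zi^3*U^2*Ui^3*Di^3*c2^3*s2 + 1*Zi^3*U^3*Di^3*c2^3*s2 + -1*Zi^3*U^3*Ui^2*Di^3*c2^3*s2 + 1*Z*Zi^2*Ui*D*Di^2*c1*c2^2*s2 + -1*Z*Zi^2*Ui^3*D*Di^2*c1*c2^2*s2 + 1*Z*Zi^2*Ui^5*D*Di^2*c1*c2^2*s2 + -1*Z*Zi^2*U*D*Di^2*c1*c2^2*s2 + 1*Z*Zi^2*U*Ui^2*D*Di^2*c1*c2^2*s2 + -1*Z*Zi^2*U*Ui^4*D*Di^2*c1*c2^2*s2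 + -1*Z*Zi^2*U^2*Ui*D*Di^2*c1*c2^2*s2 + -1*Z*Zi^2*U^2*Ui^3*D*Di^2*c1*c2^2*s2 + 1*Z*Zi^2*U^3*D*Di^2*c1*c2^2*s2 + 1*Z*Zi^2*U^3*Ui^2*D*Di^2*c1*c2^2*s2 + 1*Z*Zi^2*U^4*Ui*D*Di^2*c1*c2^2*s2 + -1*Z*Zi^2*U^5*D*Di^2*c1*c2^2*s2 + -1*Z^2*Zi*Ui*D^2*Di*c1^2*c2*s2 + 1*Z^2*Zi*Ui^3*D^2*Di*c1^2*c2*s2 + -1*Z^2*Zi*Ui^5*D^2*Di*c1^2*c2*s2 + 1*Z^2*Zi*U*D^2*Di*c1^2*c2*s2 + -1*Z^2*Zi*U*Ui^2*D^2*Di*c1^2*c2*s2 + 1*Z^2*Zi*U*Ui^4*D^2*Di*c1^2*c2*s2 + 1*Z^2*Zi*U^2*Ui*D^2*Di*c1^2*c2*s2 + 1*Z^2*Zi*U^2*Ui^3*D^2*Di*c1^2*c2*s2 + -1*Z^2*Zi*U^3*D^2*Di*c1^2*c2*s2 + -1*Z^2*Zi*U^3*Ui^2*D^2*Di*c1^2*c2*s2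 + -1*Z^2*Zi*U^4*Ui*D^2*Di*c1^2*c2*s2 + 1*Z^2*Zi*U^5*D^2*Di*c1^2*c2*s2 + -1*Z^3*Ui*D^3*c1^3*s2 + 1*Z^3*Ui^3*D^3*c1^3*s2 + 1*Z^3*U*D^3*c1^3*s2 + -1*Z^3*U*Ui^2*D^3*c1^3*s2 + 1*Z^3*U^2*Ui*D^3*c1^3*s2 + -1*Z^3*U^2*Ui^3*D^3*c1^3*s2 + -1*Z^3*U^3*D^3*c1^3*s2 + 1*Z^3*U^3*Ui^2*D^3*c1^3*s2)) * hAr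
    · simp only [sig, xl, kap, hstev, httev, hx, ha, hg]
      push_cast
      ring

end
end

section
/- Let x be a non-uniform lattice of either class, δ ∈ ℝ and λ ∈ ℂ. Define the operators L[y](z) := σ(z)·Δ_{δ−1}∇_δ y(z) + τ_δ(z)·Δ_δ y(z) + λ·y(z) and L*[w](z) := Δ_{δ−1}[ z ↦ ∇(σ·w)(z)/∇x_δ(z) ](z) − (1/Δx_{δ−1}(z))·∇[ z ↦ w(z)·τ_δ(z)·Δx_{δ−1}(z)/Δx_δ(z) ](z) + λ·w(z). Suppose ρ : ℂ → ℂ satisfies the Pearson-type equation Δ(σ·ρ)(z) = τ_δ(z)·ρ(z)·Δx_{δ−1}(z) for all z ∈ ℂ. Then for every function y : ℂ → ℂ and every z ∈ ℂ at which all difference-quotient denominators Δx_{δ−1}, Δx_δ, ∇x_δ occurring are nonzero, L*[ρ·y](z) = ρ(z)·L[y](z). (Proposition 3.1) -/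
noncomputable section

open Finset

/-- The operator `L[y](z) = σ(z)·Δ_{δ-1}∇_δ y(z) + τ_δ(z)·Δ_δ y(z) + λ·y(z)`. -/
def Lop (x : ℂ → ℂ) (st tt : Polynomial ℂ) (T : ℝ → ℂ → ℂ) (δ : ℝ) (lam : ℂ)
    (y : ℂ → ℂ) (z : ℂ) : ℂ :=
  sig x st tt z * del x (δ - 1) (nab x δ y) z + T δ z * del x δ y z + lam * y z

/-- The adjoint operator
`L*[w](z) = Δ_{δ-1}[∇(σ·w)/∇x_δ](z) - (1/Δx_{δ-1}(z))·∇[w·τ_δ·Δx_{δ-1}/Δx_δ](z) + λ·w(z)`. -/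
def LstarOp (x : ℂ → ℂ) (st tt : Polynomial ℂ) (T : ℝ → ℂ → ℂ) (δ : ℝ) (lam : ℂ)
    (wf : ℂ → ℂ) (z : ℂ) : ℂ :=
  let g2 : ℂ → ℂ := fun u =>
    wf u * T δ u * (xl x (δ - 1) (u + 1) - xl x (δ - 1) u) /
      (xl x δ (u + 1) - xl x δ u)
  del x (δ - 1) (nab x δ (fun u => sig x st tt u * wf u)) z -
    (1 / (xl x (δ - 1) (z + 1) - xl x (δ - 1) z)) * (g2 z - g2 (z - 1)) +
    lam * wf z

/-
The identity is a discrete integration by parts. Write `S = σρ`; Pearson's equation says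
`ΔS(z) = τ_δ(z)ρ(z)Δx_{δ-1}(z)`. By the discrete product rule, the drift term of `L*[ρy]`
cancels exactly the part of `∇_δ(σρy)` in which the difference falls on `S`, leaving
`∇_δ(σρy)(u) - (drift)(u-1) = S(u)·∇_δ y(u)`. Hence `L*[ρy] = Δ_{δ-1}(S·∇_δ y) + λρy`, and
one more product rule with Pearson's equation turns this into `ρ·L[y]`.
-/

def adjDrift (x : ℂ → ℂ) (δ : ℝ) (τ wf : ℂ → ℂ) (u : ℂ) : ℂ :=
  wf u * τ u * (xl x (δ - 1) (u + 1) - xl x (δ - 1) u) / (xl x δ (u + 1) - xl x δ u)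

lemma nab_add_one (x : ℂ → ℂ) (ν : ℝ) (f : ℂ → ℂ) (z : ℂ) :
    nab x ν f (z + 1) = del x ν f z := by
  simp only [nab, del, add_sub_cancel_right]

lemma LstarOp_eq_del (x : ℂ → ℂ) (st tt : Polynomial ℂ) (T : ℝ → ℂ → ℂ) (δ : ℝ) (lam : ℂ)
    (wf : ℂ → ℂ) (z : ℂ) :
    LstarOp x st tt T δ lam wf z =
      del x (δ - 1) (fun u => nab x δ (fun v => sig x st tt v * wf v) u -
        adjDrift x δ (T δ) wf (u - 1)) z + lam * wf z := by
  simp only [LstarOp, del, adjDrift, add_sub_cancel_right]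
  ring

section Pearson

variable {x : ℂ → ℂ} {δ : ℝ} {σ τ ρ : ℂ → ℂ}

-- No condition on `∇x_δ(u)`: all three terms carry it as denominator, so at a zero both sides are `0`.
lemma nab_mul_sub_adjDrift
    (hρ : ∀ z, σ (z + 1) * ρ (z + 1) - σ z * ρ z =
      τ z * ρ z * (xl x (δ - 1) (z + 1) - xl x (δ - 1) z))
    (y : ℂ → ℂ) (u : ℂ) :
    nab x δ (fun v => σ v * (ρ v * y v)) u - adjDrift x δ τ (fun v => ρ v * y v) (u - 1) =
      σ u * ρ u * nab x δ y u := by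
  have hS := hρ (u - 1)
  simp only [sub_add_cancel] at hS
  simp only [nab, adjDrift, sub_add_cancel]
  rw [div_sub_div_same, ← mul_div_assoc]
  congr 1
  linear_combination y (u - 1) * hS

lemma del_mul_of_pearson {f : ℂ → ℂ} {z : ℂ}
    (hρ : σ (z + 1) * ρ (z + 1) - σ z * ρ z =
      τ z * ρ z * (xl x (δ - 1) (z + 1) - xl x (δ - 1) z))
    (hz : xl x (δ - 1) (z + 1) - xl x (δ - 1) z ≠ 0) :
    del x (δ - 1) (fun u => σ u * ρ u * f u) z =
      ρ z * (σ z * del x (δ - 1) f z + τ z * f (z + 1)) := by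
  simp only [del]
  field_simp
  linear_combination f (z + 1) * hρ

end Pearson

theorem prop3_1_general
    (x : ℂ → ℂ)
    (st tt : Polynomial ℂ)
    (T : ℝ → ℂ → ℂ) (δ : ℝ) (lam : ℂ)
    (ρ : ℂ → ℂ)
    (hρ : ∀ z : ℂ, sig x st tt (z + 1) * ρ (z + 1) - sig x st tt z * ρ z =
      T δ z * ρ z * (xl x (δ - 1) (z + 1) - xl x (δ - 1) z)) :
    ∀ (y : ℂ → ℂ) (z : ℂ),
      xl x (δ - 1) (z + 1) - xl x (δ - 1) z ≠ 0 →
      xl x δ (z + 1) - xl x δ z ≠ 0 →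
      xl x δ z - xl x δ (z - 1) ≠ 0 →
      LstarOp x st tt T δ lam (fun u => ρ u * y u) z =
        ρ z * Lop x st tt T δ lam y z := by
  intro y z hz _ _
  have hflux := funext (nab_mul_sub_adjDrift hρ y)
  rw [LstarOp_eq_del, hflux, del_mul_of_pearson (hρ z) hz, nab_add_one, Lop]
  ring

/-- Proposition 3.1: `L*[ρ·y](z) = ρ(z)·L[y](z)`. -/
theorem prop3_1
    (w : ℂ) (x : ℂ → ℂ) (a g : ℝ → ℂ)
    (hlat : IsNonUniformLattice w x a g)
    (st tt : Polynomial ℂ) (hst : st.degree ≤ 2) (htt : tt.degree ≤ 1)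
    (T : ℝ → ℂ → ℂ) (hT : TauFamily x st tt T) (δ : ℝ) (lam : ℂ)
    (ρ : ℂ → ℂ)
    (hρ : ∀ z : ℂ, sig x st tt (z + 1) * ρ (z + 1) - sig x st tt z * ρ z =
      T δ z * ρ z * (xl x (δ - 1) (z + 1) - xl x (δ - 1) z)) :
    ∀ (y : ℂ → ℂ) (z : ℂ),
      xl x (δ - 1) (z + 1) - xl x (δ - 1) z ≠ 0 →
      xl x δ (z + 1) - xl x δ z ≠ 0 →
      xl x δ z - xl x δ (z - 1) ≠ 0 →
      LstarOp x st tt T δ lam (fun u => ρ u * y u) z =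
        ρ z * Lop x st tt T δ lam y z :=
  prop3_1_general x st tt T δ lam ρ hρ
end
end

section
/- Let x be a non-uniform lattice of either class, δ ∈ ℝ and λ ∈ ℂ, with σ*(z), τ*_δ(z) as in the context and λ*_δ := λ − κ_{2δ−1}. Then for every function w : ℂ → ℂ and every z ∈ ℂ at which the occurring denominators are nonzero: σ*(z)·Δ_{δ−1}∇_δ w(z) + τ*_δ(z)·Δ_δ w(z) + λ*_δ·w(z) = σ(z+1)·Δ_{δ−1}∇_δ w(z) − τ_{δ−2}(z+1)·∇_δ w(z) + (λ − κ_{2δ−1})·w(z); in particular the adjoint equation σ*Δ_{δ−1}∇_δ w + τ*_δ Δ_δ w + λ*_δ w = 0 is equivalent to σ(z+1)·Δ_{δ−1}∇_δ w(z) − τ_{δ−2}(z+1)·∇_δ w(z) + (λ − κ_{2δ−1})·w(z) = 0. (Proposition 3.3, with δ = ν−μ) -/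
noncomputable section

open Finset

/-- Proposition 3.3 (with `δ = ν - μ`). -/
theorem prop3_3
    (w : ℂ) (x : ℂ → ℂ) (a g : ℝ → ℂ)
    (hlat : IsNonUniformLattice w x a g)
    (st tt : Polynomial ℂ) (hst : st.degree ≤ 2) (htt : tt.degree ≤ 1)
    (T : ℝ → ℂ → ℂ) (hT : TauFamily x st tt T) (δ : ℝ) (lam : ℂ) :
    ∀ (wf : ℂ → ℂ) (z : ℂ),
      xl x (δ - 1) (z + 1) - xl x (δ - 1) z ≠ 0 →
      xl x δ (z + 1) - xl x δ z ≠ 0 →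
      xl x δ z - xl x δ (z - 1) ≠ 0 →
      (sigStar x st tt T δ z * del x (δ - 1) (nab x δ wf) z +
          tauStar x st tt T δ z * del x δ wf z +
          (lam - kap a g st tt (2 * δ - 1)) * wf z =
        sig x st tt (z + 1) * del x (δ - 1) (nab x δ wf) z -
          T (δ - 2) (z + 1) * nab x δ wf z +
          (lam - kap a g st tt (2 * δ - 1)) * wf z) ∧
      ((sigStar x st tt T δ z * del x (δ - 1) (nab x δ wf) z +
          tauStar x st tt T δ z * del x δ wf z +
          (lam - kap a g st tt (2 * δ - 1)) * wf z = 0) ↔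
        (sig x st tt (z + 1) * del x (δ - 1) (nab x δ wf) z -
          T (δ - 2) (z + 1) * nab x δ wf z +
          (lam - kap a g st tt (2 * δ - 1)) * wf z = 0)) := by

  intro wf z hD hB hC
  -- key identity from the TauFamily relation
  have h1 := hT δ (z - 1)
  have h2 := hT (δ - 2) (z + 1)
  have hsig : sigStar x st tt T δ z =
      sig x st tt (z + 1) +
        T (δ - 2) (z + 1) * (xl x (δ - 1) (z + 1) - xl x (δ - 1) z) := by
    simp only [sigStar, xl] at h1 h2 ⊢
    push_cast at h1 h2 ⊢
    ring_nf at h1 h2 ⊢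
    linear_combination h1 - h2
  have htau : tauStar x st tt T δ z = - T (δ - 2) (z + 1) := by
    simp only [tauStar]
    rw [div_eq_iff hD]
    have := hsig
    simp only [sigStar] at this
    linear_combination -this
  have hE : del x (δ - 1) (nab x δ wf) z =
      (del x δ wf z - nab x δ wf z) /
        (xl x (δ - 1) (z + 1) - xl x (δ - 1) z) := by
    simp only [del, nab, add_sub_cancel_right]
  have main : sigStar x st tt T δ z * del x (δ - 1) (nab x δ wf) z +
          tauStar x st tt T δ z * del x δ wf z +
          (lam - kap a g st tt (2 * δ - 1)) * wf z =
        sig x st tt (z + 1) * del x (δ - 1) (nab x δ wf) z -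
          T (δ - 2) (z + 1) * nab x δ wf z +
          (lam - kap a g st tt (2 * δ - 1)) * wf z := by
    rw [hsig, htau, hE]
    field_simp
    ring
  exact ⟨main, by rw [main]⟩
end
end

section
/- Let x be a non-uniform lattice of either class and λ ∈ ℂ. Then for every function w : ℂ → ℂ and every z ∈ ℂ at which the occurring denominators are nonzero: σ(z+1)·Δ_{−1}∇_0 w(z) − τ_{−2}(z+1)·∇_0 w(z) + (λ − κ_{−1})·w(z) = σ̃_{−2}(z+1)·Δ_{−1}∇_0 w(z) − ½·τ_{−2}(z+1)·[Δ_0 w(z) + ∇_0 w(z)] + (λ − κ_{−1})·w(z); moreover there exist constants A, B, C, D, E ∈ ℂ such that σ̃_{−2}(z+1) = A·x(z)² + B·x(z) + C and τ_{−2}(z+1) = D·x(z) + E at all such z. Hence the adjoint equation of the Nikiforov–Uvarov–Suslov equation σ(z)·Δ_{−1}∇_0 y + τ(z)·Δ_0 y + λ·y = 0 is again a difference equation of hypergeometric type on the non-uniform lattice. (Corollary 3.3) -/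
noncomputable section

open Finset

/-!
On both classes of lattices `x(z ± μ/2) = α(μ) x(z) + β(μ) ± ½ γ(μ) ∇x₁(z)` for some `β`, and
`(∇x₁(z))²` is a quadratic polynomial in `x(z)`. Expressing `σ̃₋₂(z+1)` and `τ₋₂(z+1) ∇x₁(z)`
through the defining relation of `τ₋₂` and substituting these expansions, `∇x₁(z)` survives only
squared in the former and only as an overall factor in the latter. The first identity only
needs `Δ₋₁∇₀ w · Δx₋₁ = Δ₀ w - ∇₀ w`, which holds because `∇x₀(z+1) = Δx₀(z)`.
-/

namespace IsNonUniformLattice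

variable {w : ℂ} {x : ℂ → ℂ} {a g : ℝ → ℂ}

theorem exists_shift (hlat : IsNonUniformLattice w x a g) :
    ∃ b : ℝ → ℂ, ∀ (μ : ℝ) (z : ℂ),
      x (z + μ / 2) = a μ * x z + b μ + g μ / 2 * (x (z + 1 / 2) - x (z - 1 / 2)) ∧
      x (z - μ / 2) = a μ * x z + b μ - g μ / 2 * (x (z + 1 / 2) - x (z - 1 / 2)) := by
  rcases hlat with ⟨hq, c₁, c₂, c₃, -, hx, ha, hg⟩ | ⟨c₁, c₂, c₃, -, hx, ha, hg⟩
  · refine ⟨fun μ => c₃ * (1 - a μ), fun μ z => ?_⟩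
    have hg' : g μ * (Complex.exp (1 / 2 * w) - Complex.exp (-(1 / 2 * w))) =
        Complex.exp (μ / 2 * w) - Complex.exp (-(μ / 2 * w)) := by
      refine hg μ ▸ div_mul_cancel₀ _ (sub_ne_zero.mpr fun h => hq ?_)
      calc Complex.exp w = Complex.exp (1 / 2 * w) * Complex.exp (1 / 2 * w) := by
            rw [← Complex.exp_add]; ring_nf
        _ = Complex.exp (-(1 / 2 * w)) * Complex.exp (1 / 2 * w) := by rw [← h]
        _ = 1 := by rw [← Complex.exp_add, neg_add_cancel, Complex.exp_zero]
    simp only [hx, ha, add_mul, sub_mul, neg_add, neg_sub, Complex.exp_add, Complex.exp_sub,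
      Complex.exp_neg] at hg' ⊢
    constructor
    · linear_combination (-1/2 * (c₁ * Complex.exp (z * w) - c₂ * (Complex.exp (z * w))⁻¹)) * hg'
    · linear_combination (1/2 * (c₁ * Complex.exp (z * w) - c₂ * (Complex.exp (z * w))⁻¹)) * hg'
  · refine ⟨fun μ => c₁ * μ ^ 2 / 4, fun μ z => ?_⟩
    simp only [hx, ha, hg]
    constructor <;> ring

theorem exists_sq_sub (hlat : IsNonUniformLattice w x a g) :
    ∃ P Q R : ℂ, ∀ z : ℂ,
      (x (z + 1 / 2) - x (z - 1 / 2)) ^ 2 = P * x z ^ 2 + Q * x z + R := by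
  rcases hlat with ⟨-, c₁, c₂, c₃, -, hx, -⟩ | ⟨c₁, c₂, c₃, -, hx, -⟩
  · set P := (Complex.exp (1 / 2 * w) - (Complex.exp (1 / 2 * w))⁻¹) ^ 2
    refine ⟨P, -2 * c₃ * P, P * (c₃ ^ 2 - 4 * c₁ * c₂), fun z => ?_⟩
    have hu : Complex.exp (z * w) * (Complex.exp (z * w))⁻¹ = 1 :=
      mul_inv_cancel₀ (Complex.exp_ne_zero _)
    simp only [hx, P, add_mul, sub_mul, neg_add, neg_sub, Complex.exp_add, Complex.exp_sub,
      Complex.exp_neg]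
    linear_combination (-4 * c₁ * c₂ * P) * hu
  · refine ⟨0, 4 * c₁, c₂ ^ 2 - 4 * c₁ * c₃, fun z => ?_⟩
    simp only [hx]
    ring

end IsNonUniformLattice

theorem xl_neg_one_sub (x : ℂ → ℂ) (z : ℂ) :
    xl x (-1) (z + 1) - xl x (-1) z = x (z + 1 / 2) - x (z - 1 / 2) := by
  simp only [xl]
  push_cast
  ring_nf

theorem TauFamily.neg_two {x : ℂ → ℂ} {st tt : Polynomial ℂ} {T : ℝ → ℂ → ℂ}
    (hT : TauFamily x st tt T) (z : ℂ) :
    T (-2) (z + 1) * (x (z + 1 / 2) - x (z - 1 / 2)) =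
      st.eval (x (z - 1)) - st.eval (x (z + 1)) +
        1 / 2 * tt.eval (x (z + 1)) * (x (z + 3 / 2) - x (z + 1 / 2)) +
        1 / 2 * tt.eval (x (z - 1)) * (x (z - 1 / 2) - x (z - 3 / 2)) := by
  have h := hT (-2) (z + 1)
  simp only [sig, xl] at h
  push_cast at h
  ring_nf at h ⊢
  linear_combination h

theorem sig_add_half_tau_neg_two {x : ℂ → ℂ} {st tt : Polynomial ℂ} {T : ℝ → ℂ → ℂ}
    (hT : TauFamily x st tt T) (z : ℂ) :
    sig x st tt (z + 1) + 1 / 2 * T (-2) (z + 1) * (xl x (-1) (z + 1) - xl x (-1) z) =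
      (st.eval (x (z + 1)) + st.eval (x (z - 1))) / 2 -
        1 / 4 * tt.eval (x (z + 1)) * (x (z + 3 / 2) - x (z + 1 / 2)) +
        1 / 4 * tt.eval (x (z - 1)) * (x (z - 1 / 2) - x (z - 3 / 2)) := by
  have h := hT.neg_two z
  simp only [sig, xl]
  push_cast
  ring_nf at h ⊢
  linear_combination (1 / 2) * h

theorem exists_sigmaTilde_quadratic_tau_affine {w : ℂ} {x : ℂ → ℂ} {a g : ℝ → ℂ}
    (hlat : IsNonUniformLattice w x a g) {st tt : Polynomial ℂ} (hst : st.degree ≤ 2)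
    (htt : tt.degree ≤ 1) {T : ℝ → ℂ → ℂ} (hT : TauFamily x st tt T) :
    ∃ A B C D E : ℂ, ∀ z : ℂ,
      sig x st tt (z + 1) + 1 / 2 * T (-2) (z + 1) * (xl x (-1) (z + 1) - xl x (-1) z) =
          A * x z ^ 2 + B * x z + C ∧
      (xl x (-1) (z + 1) - xl x (-1) z ≠ 0 → T (-2) (z + 1) = D * x z + E) := by
  obtain ⟨b, hb⟩ := hlat.exists_shift
  obtain ⟨P, Q, R, hδsq⟩ := hlat.exists_sq_sub
  have hσ (y : ℂ) : st.eval y = st.coeff 2 * y ^ 2 + st.coeff 1 * y + st.coeff 0 := by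
    conv_lhs => rw [Polynomial.eq_quadratic_of_degree_le_two hst]
    simp
  have hτ (y : ℂ) : tt.eval y = tt.coeff 1 * y + tt.coeff 0 := by
    conv_lhs => rw [Polynomial.eq_X_add_C_of_degree_le_one htt]
    simp
  set s₀ := st.coeff 0; set s₁ := st.coeff 1; set s₂ := st.coeff 2
  set t₀ := tt.coeff 0; set t₁ := tt.coeff 1
  -- With `Lₖ := α(k) x(z) + β(k)`, the expansions of `x(z ± k/2)` give
  -- `σ̃₋₂(z+1) = σ̃(L₂) - ½ (L₃ - L₁) τ̃(L₂) + c (∇x₁(z))²` and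
  -- `τ₋₂(z+1) = -γ(2) σ̃'(L₂) + ½ γ(2) τ̃' (L₃ - L₁) + G τ̃(L₂)`.
  set G := (g 3 - g 1) / 2
  set c := g 2 * (s₂ * g 2 - G * t₁) / 4
  refine ⟨s₂ * a 2 ^ 2 - (a 3 - a 1) * t₁ * a 2 / 2 + c * P,
    s₁ * a 2 + 2 * s₂ * a 2 * b 2 - ((a 3 - a 1) * (t₀ + t₁ * b 2) + (b 3 - b 1) * t₁ * a 2) / 2
      + c * Q,
    s₀ + s₁ * b 2 + s₂ * b 2 ^ 2 - (b 3 - b 1) * (t₀ + t₁ * b 2) / 2 + c * R,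
    -2 * g 2 * s₂ * a 2 + t₁ * g 2 * (a 3 - a 1) / 2 + G * t₁ * a 2,
    -g 2 * s₁ - 2 * g 2 * s₂ * b 2 + t₁ * g 2 * (b 3 - b 1) / 2 + G * (t₀ + t₁ * b 2),
    fun z => ?_⟩
  have hN := hT.neg_two z
  rw [sig_add_half_tau_neg_two hT, xl_neg_one_sub]
  simp only [hσ, hτ] at hN ⊢
  obtain ⟨h₁, hm₁⟩ := hb 1 z
  obtain ⟨h₂, hm₂⟩ := hb 2 z
  obtain ⟨h₃, hm₃⟩ := hb 3 z
  push_cast at h₁ hm₁ h₂ hm₂ h₃ hm₃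
  rw [div_self two_ne_zero] at h₂ hm₂
  set δ := x (z + 1 / 2) - x (z - 1 / 2)
  rw [h₁, hm₁, h₂, hm₂, h₃, hm₃] at hN ⊢
  exact ⟨by linear_combination c * hδsq z,
    fun hδ => mul_right_cancel₀ hδ (by linear_combination hN)⟩

theorem del_neg_one_nab_zero_mul (x f : ℂ → ℂ) (z : ℂ)
    (h : xl x (-1) (z + 1) - xl x (-1) z ≠ 0) :
    del x (-1) (nab x 0 f) z * (xl x (-1) (z + 1) - xl x (-1) z) = del x 0 f z - nab x 0 f z := by
  simp only [del, nab, add_sub_cancel_right]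
  exact div_mul_cancel₀ _ h

/-- Corollary 3.3: the adjoint equation of the Nikiforov–Uvarov–Suslov equation
is again a difference equation of hypergeometric type. -/
theorem cor3_3
    (w : ℂ) (x : ℂ → ℂ) (a g : ℝ → ℂ)
    (hlat : IsNonUniformLattice w x a g)
    (st tt : Polynomial ℂ) (hst : st.degree ≤ 2) (htt : tt.degree ≤ 1)
    (T : ℝ → ℂ → ℂ) (hT : TauFamily x st tt T) (lam : ℂ) :
    ∃ A B C D E : ℂ, ∀ (wf : ℂ → ℂ) (z : ℂ),
      xl x 0 (z + 1) - xl x 0 z ≠ 0 →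
      xl x 0 z - xl x 0 (z - 1) ≠ 0 →
      xl x (-1) (z + 1) - xl x (-1) z ≠ 0 →
      (sig x st tt (z + 1) * del x (-1) (nab x 0 wf) z -
          T (-2) (z + 1) * nab x 0 wf z + (lam - kap a g st tt (-1)) * wf z =
        (sig x st tt (z + 1) + (1 / 2) * T (-2) (z + 1) *
            (xl x (-1) (z + 1) - xl x (-1) z)) * del x (-1) (nab x 0 wf) z -
          (1 / 2) * T (-2) (z + 1) * (del x 0 wf z + nab x 0 wf z) +
          (lam - kap a g st tt (-1)) * wf z) ∧
      (sig x st tt (z + 1) + (1 / 2) * T (-2) (z + 1) *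
          (xl x (-1) (z + 1) - xl x (-1) z) = A * x z ^ 2 + B * x z + C) ∧
      (T (-2) (z + 1) = D * x z + E) := by
  obtain ⟨A, B, C, D, E, hABC⟩ := exists_sigmaTilde_quadratic_tau_affine hlat hst htt hT
  refine ⟨A, B, C, D, E, fun wf z _ _ hδ => ⟨?_, (hABC z).1, (hABC z).2 hδ⟩⟩
  linear_combination (-1 / 2 * T (-2) (z + 1)) * del_neg_one_nab_zero_mul x wf z hδ
end
end

section
/- Let x be a non-uniform lattice of either class and ν ∈ ℝ. Suppose ρ̃_ν satisfies the Pearson-type equation Δ(σ·ρ̃_ν)(z) = τ_ν(z)·ρ̃_ν(z)·∇x_{ν+1}(z) for all z ∈ ℂ, and ρ_ν satisfies the adjoint Pearson-type equation ∇(σ·ρ_ν)(z) + τ_ν(z)·ρ_ν(z)·∇x_{ν+1}(z) = 0 for all z ∈ ℂ. Then the function F(z) := σ(z)·ρ̃_ν(z)·σ(z−1)·ρ_ν(z−1) satisfies F(z+1) = F(z) for all z ∈ ℂ; equivalently, ρ_ν(z)·σ(z)·σ(z+1)·ρ̃_ν(z+1) is independent of z under unit shifts, so that ρ_ν(z) =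 const/(σ(z)·σ(z+1)·ρ̃_ν(z+1)) wherever σ(z)·σ(z+1)·ρ̃_ν(z+1) ≠ 0. (Lemma 5.1) -/
noncomputable section

open Finset

section PearsonProduct

variable {G R : Type*} [AddGroupWithOne G] [CommRing R] {σ ρt ρ t : G → R}

theorem pearson_product_add_one
    (hρt : ∀ z, σ (z + 1) * ρt (z + 1) - σ z * ρt z = t z * ρt z)
    (hρ : ∀ z, σ z * ρ z - σ (z - 1) * ρ (z - 1) + t z * ρ z = 0) (z : G) :
    σ (z + 1) * ρt (z + 1) * σ z * ρ z = σ z * ρt z * σ (z - 1) * ρ (z - 1) := by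
  linear_combination (σ z * ρ z) * hρt z + (σ z * ρt z) * hρ z

theorem pearson_product_add_one'
    (hρt : ∀ z, σ (z + 1) * ρt (z + 1) - σ z * ρt z = t z * ρt z)
    (hρ : ∀ z, σ z * ρ z - σ (z - 1) * ρ (z - 1) + t z * ρ z = 0) (z : G) :
    ρ (z + 1) * (σ (z + 1) * σ (z + 2) * ρt (z + 2)) = ρ z * (σ z * σ (z + 1) * ρt (z + 1)) := by
  have h := pearson_product_add_one hρt hρ (z + 1)
  rw [add_sub_cancel_right, add_assoc, one_add_one_eq_two] at h
  linear_combination h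

end PearsonProduct

theorem lem5_1_general
    (x : ℂ → ℂ)
    (st tt : Polynomial ℂ)
    (T : ℝ → ℂ → ℂ)
    (ν : ℝ) (ρt ρ : ℂ → ℂ)
    (hρt : ∀ z : ℂ, sig x st tt (z + 1) * ρt (z + 1) - sig x st tt z * ρt z =
      T ν z * ρt z * (xl x (ν + 1) z - xl x (ν + 1) (z - 1)))
    (hρ : ∀ z : ℂ, (sig x st tt z * ρ z - sig x st tt (z - 1) * ρ (z - 1)) +
      T ν z * ρ z * (xl x (ν + 1) z - xl x (ν + 1) (z - 1)) = 0) :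
    (∀ z : ℂ,
      sig x st tt (z + 1) * ρt (z + 1) * sig x st tt z * ρ z =
        sig x st tt z * ρt z * sig x st tt (z - 1) * ρ (z - 1)) ∧
    (∀ z : ℂ,
      ρ (z + 1) * (sig x st tt (z + 1) * sig x st tt (z + 2) * ρt (z + 2)) =
        ρ z * (sig x st tt z * sig x st tt (z + 1) * ρt (z + 1))) := by
  let t z := T ν z * (xl x (ν + 1) z - xl x (ν + 1) (z - 1))
  have hρt' : ∀ z, sig x st tt (z + 1) * ρt (z + 1) - sig x st tt z * ρt z = t z * ρt z :=
    fun z => by rw [hρt z]; ring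
  have hρ' : ∀ z, sig x st tt z * ρ z - sig x st tt (z - 1) * ρ (z - 1) + t z * ρ z = 0 :=
    fun z => by rw [← hρ z]; ring
  exact ⟨pearson_product_add_one hρt' hρ', pearson_product_add_one' hρt' hρ'⟩

/-- Lemma 5.1. -/
theorem lem5_1
    (w : ℂ) (x : ℂ → ℂ) (a g : ℝ → ℂ)
    (hlat : IsNonUniformLattice w x a g)
    (st tt : Polynomial ℂ) (hst : st.degree ≤ 2) (htt : tt.degree ≤ 1)
    (T : ℝ → ℂ → ℂ) (hT : TauFamily x st tt T)
    (ν : ℝ) (ρt ρ : ℂ → ℂ)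
    (hρt : ∀ z : ℂ, sig x st tt (z + 1) * ρt (z + 1) - sig x st tt z * ρt z =
      T ν z * ρt z * (xl x (ν + 1) z - xl x (ν + 1) (z - 1)))
    (hρ : ∀ z : ℂ, (sig x st tt z * ρ z - sig x st tt (z - 1) * ρ (z - 1)) +
      T ν z * ρ z * (xl x (ν + 1) z - xl x (ν + 1) (z - 1)) = 0) :
    (∀ z : ℂ,
      sig x st tt (z + 1) * ρt (z + 1) * sig x st tt z * ρ z =
        sig x st tt z * ρt z * sig x st tt (z - 1) * ρ (z - 1)) ∧
    (∀ z : ℂ,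
      ρ (z + 1) * (sig x st tt (z + 1) * sig x st tt (z + 2) * ρt (z + 2)) =
        ρ z * (sig x st tt z * sig x st tt (z + 1) * ρt (z + 1))) :=
  lem5_1_general x st tt T ν ρt ρ hρt hρ
end
end

section
/- Let x be the quadratic lattice x(z) = z² and ν ∈ ℝ. Suppose ρ_ν satisfies the adjoint Pearson-type equation ∇(σ·ρ_ν)(z) + τ_ν(z)·ρ_ν(z)·∇x_{ν+1}(z) = 0 for all z ∈ ℂ. Then ρ_ν(z+1)·σ(−z−1−ν) = ρ_ν(z)·σ(z) for all z ∈ ℂ; equivalently, ρ_ν(z+1)/ρ_ν(z) = σ(z)/σ(−z−1−ν) wherever the denominators are nonzero. (Lemma 5.2) -/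
noncomputable section

open Finset

/-! On an even lattice, `x(-z) = x(z)`, negating the argument reverses `∇x₁`, so
`σ(-w) = σ(w) + τ(w)·∇x₁(w)`. The defining relation of `τ_ν` then reads
`τ_ν(z)·∇x_{ν+1}(z) = σ(-z-ν) - σ(z)`, and substituting it into the Pearson equation at `z + 1`
cancels the terms `σ(z+1)·ρ(z+1)`, leaving the two-term recurrence. -/

theorem sig_neg_of_even {x : ℂ → ℂ} (hx : ∀ z, x (-z) = x z) (st tt : Polynomial ℂ) (w : ℂ) :
    sig x st tt (-w) = sig x st tt w + tt.eval (x w) * (xl x 1 w - xl x 1 (w - 1)) := by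
  have hplus : x (-w + ((1 : ℝ) : ℂ) / 2) = x (w - 1 + ((1 : ℝ) : ℂ) / 2) := by
    rw [← hx]; congr 1; push_cast; ring
  have hminus : x (-w - 1 + ((1 : ℝ) : ℂ) / 2) = x (w + ((1 : ℝ) : ℂ) / 2) := by
    rw [← hx]; congr 1; push_cast; ring
  simp only [sig, xl, hx, hplus, hminus]
  ring

theorem TauFamily.mul_nabla_eq_sig_neg_sub {x : ℂ → ℂ} {st tt : Polynomial ℂ} {T : ℝ → ℂ → ℂ}
    (hT : TauFamily x st tt T) (hx : ∀ z, x (-z) = x z) (ν : ℝ) (z : ℂ) :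
    T ν z * (xl x (ν + 1) z - xl x (ν + 1) (z - 1)) =
      sig x st tt (-(z + ν)) - sig x st tt z := by
  rw [hT, sig_neg_of_even hx]
  ring

theorem lem5_2_general
    (x : ℂ → ℂ) (hx : ∀ z : ℂ, x z = z ^ 2)
    (st tt : Polynomial ℂ)
    (T : ℝ → ℂ → ℂ) (hT : TauFamily x st tt T)
    (ν : ℝ) (ρ : ℂ → ℂ)
    (hρ : ∀ z : ℂ, (sig x st tt z * ρ z - sig x st tt (z - 1) * ρ (z - 1)) +
      T ν z * ρ z * (xl x (ν + 1) z - xl x (ν + 1) (z - 1)) = 0) :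
    ∀ z : ℂ, ρ (z + 1) * sig x st tt (-z - 1 - (ν : ℂ)) = ρ z * sig x st tt z := by
  have hx_even : ∀ z, x (-z) = x z := fun z => by rw [hx, hx, neg_sq]
  intro z
  have hpearson := hρ (z + 1)
  have htau := hT.mul_nabla_eq_sig_neg_sub hx_even ν (z + 1)
  rw [add_sub_cancel_right] at hpearson htau
  rw [show -z - 1 - (ν : ℂ) = -(z + 1 + ν) by ring]
  linear_combination hpearson - ρ (z + 1) * htau

/-- Lemma 5.2 (quadratic lattice `x(z) = z²`). -/
theorem lem5_2
    (x : ℂ → ℂ) (hx : ∀ z : ℂ, x z = z ^ 2)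
    (st tt : Polynomial ℂ) (hst : st.degree ≤ 2) (htt : tt.degree ≤ 1)
    (T : ℝ → ℂ → ℂ) (hT : TauFamily x st tt T)
    (ν : ℝ) (ρ : ℂ → ℂ)
    (hρ : ∀ z : ℂ, (sig x st tt z * ρ z - sig x st tt (z - 1) * ρ (z - 1)) +
      T ν z * ρ z * (xl x (ν + 1) z - xl x (ν + 1) (z - 1)) = 0) :
    ∀ z : ℂ, ρ (z + 1) * sig x st tt (-z - 1 - (ν : ℂ)) = ρ z * sig x st tt z :=
  lem5_2_general x hx st tt T hT ν ρ hρ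
end
end
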